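/- arXiv:math/0409474 — 7 statements merged into one kernel-verified Lean document; each statement's English description precedes it below -/
import Mathlib

section
/- If T is an out-quadrangular tournament with minimum out-degree at least 2, then the minimum out-degree of T is at least 4. -/
open Finset

structure Tournament (V : Type) where
  beats : V → V → Bool
  asymm : ∀ u v : V, u ≠ v → beats u v = !beats v u
  irrefl : ∀ v : V, beats v v = false

def Tournament.dual {V : Type} (T : Tournament V) : Tournament V where
  beats u v := T.beats v u
  asymm u v h := T.asymm v u h.symm
  irrefl v := T.irrefl v

variable {V : Type} [Fintype V] [DecidableEq V]

def outset (T : Tournament V) (v : V) : Finset V :=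
  univ.filter (fun u => T.beats v u = true)

def inset (T : Tournament V) (v : V) : Finset V :=
  univ.filter (fun u => T.beats u v = true)

def OutQuadrangular (T : Tournament V) : Prop :=
  ∀ u v : V, u ≠ v → (outset T u ∩ outset T v).card ≠ 1

def InQuadrangular (T : Tournament V) : Prop :=
  ∀ u v : V, u ≠ v → (inset T u ∩ inset T v).card ≠ 1

def Quadrangular (T : Tournament V) : Prop :=
  OutQuadrangular T ∧ InQuadrangular T

def NearRegular (T : Tournament V) : Prop :=
  ∀ u v : V, (outset T u).card ≤ (outset T v).card + 1

def Dominating (T : Tournament V) (S : Finset V) : Prop :=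
  ∀ v : V, v ∈ S ∨ ∃ u ∈ S, T.beats u v = true

def pairOutUnion (T : Tournament V) (S : Finset V) : Finset V :=
  S.biUnion fun u => S.biUnion fun v => if u = v then ∅ else outset T u ∩ outset T v

def pairInUnion (T : Tournament V) (S : Finset V) : Finset V :=
  S.biUnion fun u => S.biUnion fun v => if u = v then ∅ else inset T u ∩ inset T v

def StronglyQuadrangular (T : Tournament V) : Prop :=
  (∀ S : Finset V, (∀ u ∈ S, ∃ v ∈ S, u ≠ v ∧ (outset T u ∩ outset T v).Nonempty) →
    S.card ≤ (pairOutUnion T S).card) ∧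
  (∀ S : Finset V, (∀ u ∈ S, ∃ v ∈ S, u ≠ v ∧ (inset T u ∩ inset T v).Nonempty) →
    S.card ≤ (pairInUnion T S).card)


lemma inter_outset_eq (T : Tournament V) (v x : V) :
    outset T x ∩ outset T v = (outset T v).filter (fun y => T.beats x y = true) := by
  ext y
  simp [outset, Finset.mem_inter, Finset.mem_filter]
  tauto

lemma mem_outset_ne (T : Tournament V) {v x : V} (h : x ∈ outset T v) : x ≠ v := by
  intro he
  subst he
  simp [outset, T.irrefl] at h

theorem stmt_2 (T : Tournament V) (hq : OutQuadrangular T)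
    (h2 : ∀ v : V, 2 ≤ (outset T v).card) :
    ∀ v : V, 4 ≤ (outset T v).card := by
  intro v
  by_contra hlt
  push_neg at hlt
  have h2v := h2 v
  interval_cases hc : (outset T v).card
  · -- card = 2
    obtain ⟨a, b, hab, hS⟩ := Finset.card_eq_two.mp hc
    have ha : a ∈ outset T v := by rw [hS]; simp
    have hb : b ∈ outset T v := by rw [hS]; simp
    have hav := mem_outset_ne T ha
    have hbv := mem_outset_ne T hb
    cases hpab : T.beats a b with
    | true =>
      apply hq a v hav
      rw [inter_outset_eq, hS]
      have : ({a, b} : Finset V).filter (fun y => T.beats a y = true) = {b} := by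
        ext y
        simp only [Finset.mem_filter, Finset.mem_insert, Finset.mem_singleton]
        constructor
        · rintro ⟨(rfl | rfl), h⟩
          · rw [T.irrefl] at h; exact absurd h (by simp)
          · rfl
        · rintro rfl; exact ⟨Or.inr rfl, hpab⟩
      rw [this, Finset.card_singleton]
    | false =>
      apply hq b v hbv
      rw [inter_outset_eq, hS]
      have hpba : T.beats b a = true := by
        rw [T.asymm b a hab.symm, hpab]; rfl
      have : ({a, b} : Finset V).filter (fun y => T.beats b y = true) = {a} := by
        ext y
        simp only [Finset.mem_filter, Finset.mem_insert, Finset.mem_singleton]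
        constructor
        · rintro ⟨(rfl | rfl), h⟩
          · rfl
          · rw [T.irrefl] at h; exact absurd h (by simp)
        · rintro rfl; exact ⟨Or.inl rfl, hpba⟩
      rw [this, Finset.card_singleton]
  · -- card = 3
    obtain ⟨a, b, c, hab, hac, hbc, hS⟩ := Finset.card_eq_three.mp hc
    have ha : a ∈ outset T v := by rw [hS]; simp
    have hb : b ∈ outset T v := by rw [hS]; simp
    have hc' : c ∈ outset T v := by rw [hS]; simp
    have hav := mem_outset_ne T ha
    have hbv := mem_outset_ne T hb
    have hcv := mem_outset_ne T hc'
    -- key: for x ∈ {a,b,c}, the filtered card ≠ 1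
    have key : ∀ x : V, x ∈ outset T v →
        (({a, b, c} : Finset V).filter (fun y => T.beats x y = true)).card ≠ 1 := by
      intro x hx h1
      apply hq x v (mem_outset_ne T hx)
      rw [inter_outset_eq, hS, h1]
    have hba : T.beats b a = !T.beats a b := T.asymm b a hab.symm
    have hca : T.beats c a = !T.beats a c := T.asymm c a hac.symm
    have hcb : T.beats c b = !T.beats b c := T.asymm c b hbc.symm
    -- compute cards
    have cardfun : ∀ P : V → Bool,
        P a = false ∨ P b = false ∨ P c = false →
        (({a, b, c} : Finset V).filter (fun y => P y = true)).card
          = (if P a then 1 else 0) + (if P b then 1 else 0) + (if P c then 1 else 0) := by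
      intro P _
      rw [show ({a, b, c} : Finset V) = insert a (insert b {c}) from rfl]
      rw [Finset.filter_insert, Finset.filter_insert, Finset.filter_singleton]
      by_cases pa : P a = true <;> by_cases pb : P b = true <;> by_cases pc : P c = true <;>
        simp_all [Finset.card_insert_of_notMem, hab, hac, hbc]
    have ka := key a ha
    have kb := key b hb
    have kc := key c hc'
    rw [cardfun (T.beats a) (Or.inl (T.irrefl a))] at ka
    rw [cardfun (T.beats b) (Or.inr (Or.inl (T.irrefl b)))] at kb
    rw [cardfun (T.beats c) (Or.inr (Or.inr (T.irrefl c)))] at kc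
    rw [T.irrefl a] at ka
    rw [T.irrefl b, hba] at kb
    rw [T.irrefl c, hca, hcb] at kc
    cases hp : T.beats a b <;> cases hqq : T.beats b c <;> cases hr : T.beats a c <;>
      simp_all
end

section
/- There does not exist a quadrangular near regular tournament of order 10. -/
open Finset

variable {V : Type} [Fintype V] [DecidableEq V]

set_option linter.unusedSectionVars false

lemma mem_outset {T : Tournament V} {u v : V} : v ∈ outset T u ↔ T.beats u v = true := by
  simp [outset]

lemma mem_inset {T : Tournament V} {u v : V} : v ∈ inset T u ↔ T.beats v u = true := by
  simp [inset]

lemma beats_rev {T : Tournament V} {s t : V} (h : s ≠ t) :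
    T.beats t s = true ↔ T.beats s t = false := by
  rw [T.asymm t s h.symm]; cases T.beats s t <;> simp

lemma beats_total {T : Tournament V} {s t : V} (h : s ≠ t) :
    T.beats s t = true ∨ T.beats t s = true := by
  rw [beats_rev h]; cases T.beats s t <;> simp

lemma not_both {T : Tournament V} {s t : V} (h1 : T.beats s t = true)
    (h2 : T.beats t s = true) : False := by
  by_cases h : s = t
  · subst h; rw [T.irrefl] at h1; exact Bool.false_ne_true h1
  · rw [beats_rev h] at h2; rw [h2] at h1; exact Bool.false_ne_true h1

lemma not_self_mem_outset {T : Tournament V} {v : V} : v ∉ outset T v := by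
  simp [mem_outset, T.irrefl]

lemma not_self_mem_inset {T : Tournament V} {v : V} : v ∉ inset T v := by
  simp [mem_inset, T.irrefl]

lemma split (T : Tournament V) {s : V} {W : Finset V} (hs : s ∉ W) :
    (W ∩ outset T s).card + (W ∩ inset T s).card = W.card := by
  classical
  have h1 : W ∩ outset T s = W.filter (fun t => T.beats s t = true) := by
    ext t; simp [mem_outset, mem_filter]
  have h2 : W ∩ inset T s = W.filter (fun t => ¬ (T.beats s t = true)) := by
    ext t
    simp only [mem_inter, mem_filter, mem_inset]
    constructor
    · rintro ⟨htW, hts⟩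
      have hne : s ≠ t := by rintro rfl; exact hs htW
      refine ⟨htW, ?_⟩
      rw [(beats_rev hne).mp hts]; simp
    · rintro ⟨htW, hts⟩
      have hne : s ≠ t := by rintro rfl; exact hs htW
      refine ⟨htW, ?_⟩
      rw [beats_rev hne]
      exact Bool.not_eq_true _ ▸ hts
  rw [h1, h2]
  exact Finset.card_filter_add_card_filter_not _

lemma deg_add (T : Tournament V) (v : V) :
    (outset T v).card + (inset T v).card = Fintype.card V - 1 := by
  have hs : v ∉ univ.erase v := notMem_erase v univ
  have h1 : univ.erase v ∩ outset T v = outset T v := by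
    rw [Finset.inter_eq_right]
    intro x hx
    exact mem_erase.mpr ⟨fun h => not_self_mem_outset (h ▸ hx), mem_univ x⟩
  have h2 : univ.erase v ∩ inset T v = inset T v := by
    rw [Finset.inter_eq_right]
    intro x hx
    exact mem_erase.mpr ⟨fun h => not_self_mem_inset (h ▸ hx), mem_univ x⟩
  have := split T hs
  rw [h1, h2] at this
  rw [this, Finset.card_erase_of_mem (mem_univ v), Finset.card_univ]

lemma sum_common_out (T : Tournament V) (u : V) :
    ∑ w ∈ univ.erase u, (outset T u ∩ outset T w).card
      = ∑ x ∈ outset T u, ((inset T x).card - 1) := by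
  classical
  have l1 : ∀ w ∈ univ.erase u, (outset T u ∩ outset T w).card
      = ∑ x ∈ outset T u, (if T.beats w x = true then (1:ℕ) else 0) := by
    intro w _
    have : outset T u ∩ outset T w = (outset T u).filter (fun x => T.beats w x = true) := by
      ext x; simp [mem_outset, mem_filter]
    rw [this, Finset.card_eq_sum_ones, Finset.sum_filter]
  rw [Finset.sum_congr rfl l1, Finset.sum_comm]
  refine Finset.sum_congr rfl fun x hx => ?_
  have hux : T.beats u x = true := mem_outset.mp hx
  have h1 : ∑ w ∈ univ.erase u, (if T.beats w x = true then (1:ℕ) else 0)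
      = ((univ.erase u).filter (fun w => T.beats w x = true)).card := by
    rw [Finset.card_eq_sum_ones, Finset.sum_filter]
  have h2 : (univ.erase u).filter (fun w => T.beats w x = true) = (inset T x).erase u := by
    ext w
    simp only [mem_filter, mem_erase, mem_inset, mem_univ, true_and, and_true, and_comm]
  rw [h1, h2, Finset.card_erase_of_mem (mem_inset.mpr hux)]

lemma pair_count (T : Tournament V) {u w : V} (hcd : Fintype.card V = 10)
    (hbeats : T.beats u w = true) (hO : outset T u ∩ outset T w = ∅) :
    (outset T u).card + (outset T w).card + (inset T u ∩ inset T w).card = 9 := by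
  classical
  have hne : u ≠ w := by rintro rfl; rw [T.irrefl] at hbeats; exact Bool.false_ne_true hbeats
  set A := outset T u ∪ outset T w ∪ (inset T u ∩ inset T w) with hA
  have huA : u ∉ A := by
    simp only [hA, mem_union, mem_inter, mem_outset, mem_inset]
    rintro ((h | h) | ⟨h, -⟩)
    · rw [T.irrefl] at h; exact Bool.false_ne_true h
    · exact not_both hbeats h
    · rw [T.irrefl] at h; exact Bool.false_ne_true h
  have hAins : insert u A = univ := by
    apply Finset.eq_univ_of_forall
    intro x
    by_cases hxu : x = u
    · simp [hxu]
    · rw [Finset.mem_insert]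
      right
      simp only [hA, mem_union, mem_inter, mem_outset, mem_inset]
      by_cases hxw : x = w
      · exact Or.inl (Or.inl (hxw ▸ hbeats))
      · rcases beats_total (T := T) (show u ≠ x from fun h => hxu h.symm) with h1 | h1
        · exact Or.inl (Or.inl h1)
        · rcases beats_total (T := T) (show w ≠ x from fun h => hxw h.symm) with h2 | h2
          · exact Or.inl (Or.inr h2)
          · exact Or.inr ⟨h1, h2⟩
  have hd1 : Disjoint (outset T u) (outset T w) :=
    Finset.disjoint_iff_inter_eq_empty.mpr hO
  have hd2 : Disjoint (outset T u ∪ outset T w) (inset T u ∩ inset T w) := by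
    rw [Finset.disjoint_left]
    intro x hx hx2
    simp only [mem_union, mem_outset] at hx
    simp only [mem_inter, mem_inset] at hx2
    rcases hx with h | h
    · exact not_both h hx2.1
    · exact not_both h hx2.2
  have hcardA : A.card = (outset T u).card + (outset T w).card
      + (inset T u ∩ inset T w).card := by
    rw [hA, Finset.card_union_of_disjoint hd2, Finset.card_union_of_disjoint hd1]
  have : (insert u A).card = A.card + 1 := Finset.card_insert_of_notMem huA
  rw [hAins, Finset.card_univ, hcd] at this
  omega

lemma arcs (T : Tournament V) (S : Finset V) :
    2 * ∑ s ∈ S, (S ∩ outset T s).card = S.card * (S.card - 1) := by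
  classical
  have key : ∀ s ∈ S, (S ∩ outset T s).card
      = ∑ t ∈ S, (if T.beats s t = true then 1 else 0) := by
    intro s _
    have : S ∩ outset T s = S.filter (fun t => T.beats s t = true) := by
      ext t; simp [mem_outset, mem_filter]
    rw [this, Finset.card_eq_sum_ones, Finset.sum_filter]
  rw [Finset.sum_congr rfl key]
  have swap : ∑ s ∈ S, ∑ t ∈ S, (if T.beats s t = true then (1:ℕ) else 0)
      = ∑ s ∈ S, ∑ t ∈ S, (if T.beats t s = true then (1:ℕ) else 0) := Finset.sum_comm
  have e1 : 2 * ∑ s ∈ S, ∑ t ∈ S, (if T.beats s t = true then (1:ℕ) else 0)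
      = ∑ s ∈ S, ∑ t ∈ S,
        ((if T.beats s t = true then (1:ℕ) else 0) + (if T.beats t s = true then 1 else 0)) := by
    simp only [Finset.sum_add_distrib]
    rw [two_mul]
    nth_rewrite 2 [swap]
    rfl
  rw [e1]
  have e2 : ∀ s ∈ S, ∀ t ∈ S,
      (if T.beats s t = true then (1:ℕ) else 0) + (if T.beats t s = true then 1 else 0)
      = if s = t then 0 else 1 := by
    intro s _ t _
    by_cases h : s = t
    · subst h; simp [T.irrefl]
    · rcases (by rw [T.asymm t s (Ne.symm h)]; cases hst : T.beats s t <;> simp :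
        T.beats s t = true ∨ T.beats t s = true) with h1 | h1
      · have h2 : T.beats t s = false := by
          rw [T.asymm t s (Ne.symm h), h1]; rfl
        simp [h1, h2, h]
      · have h2 : T.beats s t = false := by
          rw [T.asymm s t h, h1]; rfl
        simp [h1, h2, h]
  calc ∑ s ∈ S, ∑ t ∈ S,
        ((if T.beats s t = true then (1:ℕ) else 0) + (if T.beats t s = true then 1 else 0))
      = ∑ s ∈ S, ∑ t ∈ S, (if s = t then (0:ℕ) else 1) := by
        refine Finset.sum_congr rfl fun s hs => Finset.sum_congr rfl fun t ht => e2 s hs t ht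
    _ = ∑ s ∈ S, (S.card - 1) := by
        refine Finset.sum_congr rfl fun s hs => ?_
        have h1 : ∑ t ∈ S, (if s = t then (0:ℕ) else 1) + ∑ t ∈ S, (if s = t then (1:ℕ) else 0)
            = S.card := by
          rw [← Finset.sum_add_distrib]
          calc ∑ t ∈ S, ((if s = t then (0:ℕ) else 1) + if s = t then 1 else 0)
              = ∑ t ∈ S, 1 := by
                refine Finset.sum_congr rfl fun t _ => ?_
                by_cases h : s = t <;> simp [h]
            _ = S.card := by simp
        have h2 : ∑ t ∈ S, (if s = t then (1:ℕ) else 0) = 1 := by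
          rw [Finset.sum_ite_eq] ; simp [hs]
        omega
    _ = S.card * (S.card - 1) := by rw [Finset.sum_const, smul_eq_mul]

lemma erase_inter_of_not_mem {s : V} {W X : Finset V} (hsX : s ∉ X) :
    W.erase s ∩ X = W ∩ X := by
  ext x
  simp only [mem_inter, mem_erase]
  constructor
  · rintro ⟨⟨-, hW⟩, hX⟩; exact ⟨hW, hX⟩
  · rintro ⟨hW, hX⟩
    exact ⟨⟨fun h => hsX (h ▸ hX), hW⟩, hX⟩

lemma core (T : Tournament V) (hcd : Fintype.card V = 10)
    (houtq : OutQuadrangular T) (hinq : InQuadrangular T)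
    (hdlo : ∀ v : V, 4 ≤ (outset T v).card) (hdhi : ∀ v : V, (outset T v).card ≤ 5)
    {p q : V} (hpq : T.beats p q = true)
    (hdsum : (outset T p).card + (outset T q).card = 9)
    (hO : outset T p ∩ outset T q = ∅)
    (hI : inset T p ∩ inset T q = ∅) : False := by
  classical
  have hne : p ≠ q := by
    rintro rfl; rw [T.irrefl] at hpq; exact Bool.false_ne_true hpq
  set S := outset T q with hS
  set R := (inset T q).erase p with hR
  have hpIq : p ∈ inset T q := mem_inset.mpr hpq
  have hqS : q ∉ S := not_self_mem_outset
  have hpS : p ∉ S := by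
    intro h
    exact not_both hpq (mem_outset.mp h)
  have hpR : p ∉ R := notMem_erase p _
  have hqR : q ∉ R := by
    intro h
    exact not_self_mem_inset (mem_of_mem_erase h)
  -- F1 : outset T q = inset T p
  have F1 : outset T q = inset T p := by
    ext x
    constructor
    · intro hx
      have hqx : T.beats q x = true := mem_outset.mp hx
      have hxp : x ≠ p := by
        rintro rfl; exact not_both hpq hqx
      have hnpx : ¬ (T.beats p x = true) := by
        intro hpx
        have : x ∈ outset T p ∩ outset T q :=
          mem_inter.mpr ⟨mem_outset.mpr hpx, hx⟩
        rw [hO] at this; exact notMem_empty x this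
      rcases beats_total (T := T) (Ne.symm hxp) with h | h
      · exact absurd h hnpx
      · exact mem_inset.mpr h
    · intro hx
      have hxp : T.beats x p = true := mem_inset.mp hx
      have hxq : x ≠ q := by
        rintro rfl; exact not_both hpq hxp
      have hnxq : ¬ (T.beats x q = true) := by
        intro hq2
        have : x ∈ inset T p ∩ inset T q :=
          mem_inter.mpr ⟨hx, mem_inset.mpr hq2⟩
        rw [hI] at this; exact notMem_empty x this
      rcases beats_total (T := T) hxq with h | h
      · exact absurd h hnxq
      · exact mem_outset.mpr h
  -- Iq = insert p R
  have IqR : inset T q = insert p R := (Finset.insert_erase hpIq).symm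
  -- F2 : outset T p = insert q R
  have F2 : outset T p = insert q R := by
    ext x
    constructor
    · intro hx
      have hpx : T.beats p x = true := mem_outset.mp hx
      by_cases hxq : x = q
      · exact hxq ▸ mem_insert_self q R
      · have hxp : x ≠ p := by
          rintro rfl; rw [T.irrefl] at hpx; exact Bool.false_ne_true hpx
        have hnqx : ¬ (T.beats q x = true) := by
          intro hqx
          have : x ∈ outset T p ∩ outset T q :=
            mem_inter.mpr ⟨hx, mem_outset.mpr hqx⟩
          rw [hO] at this; exact notMem_empty x this
        rcases beats_total (T := T) (show q ≠ x from fun h => hxq h.symm) with h | h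
        · exact absurd h hnqx
        · exact mem_insert_of_mem (mem_erase.mpr ⟨hxp, mem_inset.mpr h⟩)
    · intro hx
      rcases mem_insert.mp hx with h | h
      · exact h ▸ mem_outset.mpr hpq
      · have hxq : T.beats x q = true := mem_inset.mp (mem_of_mem_erase h)
        have hxp : x ≠ p := (mem_erase.mp h).1
        rcases beats_total (T := T) (Ne.symm hxp) with h2 | h2
        · exact mem_outset.mpr h2
        · -- x beats p : then x ∈ inset T p = outset T q, so q beats x, contra
          have : x ∈ outset T q := F1 ▸ mem_inset.mpr h2
          exact absurd hxq fun _ => not_both (mem_outset.mp this) hxq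
  -- sizes
  have hiq : (outset T q).card + (inset T q).card = 9 := by
    have := deg_add T q; rw [hcd] at this; omega
  have hcardR : R.card + 1 = (inset T q).card := by
    rw [hR, Finset.card_erase_of_mem hpIq]
    have : 1 ≤ (inset T q).card := Finset.card_pos.mpr ⟨p, hpIq⟩
    omega
  have hSR : Disjoint S R := by
    rw [Finset.disjoint_left]
    intro x hxS hxR
    exact not_both (mem_outset.mp hxS) (mem_inset.mp (mem_of_mem_erase hxR))
  -- per-vertex facts for s ∈ S
  have key : ∀ s ∈ S,
      ((S ∩ outset T s).card ≠ 1 ∧ (S ∩ outset T s).card + 2 ≠ S.card) ∧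
      ((R ∩ outset T s).card ≠ 1 ∧ (R ∩ outset T s).card + 1 ≠ R.card) ∧
      (outset T s).card = 1 + (S ∩ outset T s).card + (R ∩ outset T s).card ∧
      (S ∩ outset T s).card + 1 ≤ S.card ∧ (R ∩ outset T s).card ≤ R.card := by
    intro s hsS
    have hqs : T.beats q s = true := mem_outset.mp hsS
    have hsq : s ≠ q := fun h => hqS (h ▸ hsS)
    have hsp : s ≠ p := fun h => hpS (h ▸ hsS)
    have hsbp : T.beats s p = true := mem_inset.mp (F1 ▸ hsS)
    have hsR : s ∉ R := Finset.disjoint_left.mp hSR hsS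
    have hsOs : s ∉ outset T s := not_self_mem_outset
    -- C1
    have hC1 : (S ∩ outset T s).card ≠ 1 := by
      have := houtq q s (Ne.symm hsq)
      rwa [← hS] at this
    -- split on S.erase s
    have hsplitS : (S ∩ outset T s).card + (S ∩ inset T s).card + 1 = S.card := by
      have h0 := split T (notMem_erase s S)
      rw [erase_inter_of_not_mem hsOs, erase_inter_of_not_mem not_self_mem_inset,
        Finset.card_erase_of_mem hsS] at h0
      have : 1 ≤ S.card := Finset.card_pos.mpr ⟨s, hsS⟩
      omega
    -- C2
    have hC2 : (S ∩ inset T s).card ≠ 1 := by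
      have := hinq p s hsp.symm
      rwa [← F1, ← hS] at this
    -- C3
    have hC3 : (R ∩ outset T s).card ≠ 1 := by
      have h0 := houtq p s hsp.symm
      have hqOs : q ∉ outset T s := by
        intro h
        exact not_both hqs (mem_outset.mp h)
      rwa [F2, Finset.insert_inter_of_notMem hqOs] at h0
    -- split on R
    have hsplitR : (R ∩ outset T s).card + (R ∩ inset T s).card = R.card :=
      split T hsR
    -- C4
    have hC4 : (R ∩ inset T s).card ≠ 1 := by
      have h0 := hinq q s (Ne.symm hsq)
      have hpIs : p ∉ inset T s := by
        intro h
        exact not_both (mem_inset.mp h) hsbp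
      rwa [IqR, Finset.insert_inter_of_notMem hpIs] at h0
    -- C5 : degree decomposition
    have hC5 : (outset T s).card = 1 + (S ∩ outset T s).card + (R ∩ outset T s).card := by
      have hdecomp : outset T s = insert p ((S ∩ outset T s) ∪ (R ∩ outset T s)) := by
        ext x
        constructor
        · intro hx
          have hsx : T.beats s x = true := mem_outset.mp hx
          by_cases hxp : x = p
          · rw [hxp]; exact mem_insert_self p _
          · have hxq : x ≠ q := by
              rintro rfl; exact not_both hqs hsx
            apply mem_insert_of_mem
            rcases beats_total (T := T) (show q ≠ x from fun h => hxq h.symm) with h | h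
            · exact mem_union_left _ (mem_inter.mpr ⟨mem_outset.mpr h, hx⟩)
            · exact mem_union_right _
                (mem_inter.mpr ⟨mem_erase.mpr ⟨hxp, mem_inset.mpr h⟩, hx⟩)
        · intro hx
          rcases mem_insert.mp hx with h | h
          · exact h ▸ mem_outset.mpr hsbp
          · rcases mem_union.mp h with h2 | h2
            · exact (mem_inter.mp h2).2
            · exact (mem_inter.mp h2).2
      have hcardeq := congrArg Finset.card hdecomp
      have hpU : p ∉ (S ∩ outset T s) ∪ (R ∩ outset T s) := by
        intro h
        rcases mem_union.mp h with h2 | h2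
        · exact hpS (mem_inter.mp h2).1
        · exact hpR (mem_inter.mp h2).1
      rw [Finset.card_insert_of_notMem hpU,
        Finset.card_union_of_disjoint
          (hSR.mono Finset.inter_subset_left Finset.inter_subset_left)] at hcardeq
      omega
    -- bounds
    have hb1 : (S ∩ outset T s).card + 1 ≤ S.card := by
      have hsub : S ∩ outset T s ⊆ S.erase s := by
        intro x hx
        refine mem_erase.mpr ⟨?_, (mem_inter.mp hx).1⟩
        rintro rfl
        exact hsOs (mem_inter.mp hx).2
      have := Finset.card_le_card hsub
      rw [Finset.card_erase_of_mem hsS] at this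
      have : 1 ≤ S.card := Finset.card_pos.mpr ⟨s, hsS⟩
      omega
    have hb2 : (R ∩ outset T s).card ≤ R.card :=
      Finset.card_le_card Finset.inter_subset_left
    exact ⟨⟨hC1, by omega⟩, ⟨hC3, by omega⟩, hC5, hb1, hb2⟩
  -- arcs within S
  have harcsS : 2 * ∑ s ∈ S, (S ∩ outset T s).card = S.card * (S.card - 1) := arcs T S
  -- case on the size of S
  have hdq45 : (outset T q).card = 4 ∨ (outset T q).card = 5 := by
    have := hdlo q; have := hdhi q; omega
  rcases hdq45 with hdq | hdq
  · -- |S| = 4, |R| = 4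
    have hScard : S.card = 4 := hdq
    have hRcard : R.card = 4 := by omega
    have hos : ∀ s ∈ S, (S ∩ outset T s).card = 0 ∨ (S ∩ outset T s).card = 3 := by
      intro s hsS
      obtain ⟨⟨h1, h2⟩, -, -, h4, -⟩ := key s hsS
      omega
    set T3 := S.filter (fun s => (S ∩ outset T s).card = 3) with hT3
    have hsum3 : ∑ s ∈ S, (S ∩ outset T s).card = 3 * T3.card := by
      rw [← Finset.sum_filter_add_sum_filter_not S
        (fun s => (S ∩ outset T s).card = 3)]
      have e1 : ∑ s ∈ T3, (S ∩ outset T s).card = 3 * T3.card := by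
        rw [Finset.sum_congr rfl (fun s hs => (mem_filter.mp hs).2),
          Finset.sum_const, smul_eq_mul, mul_comm]
      have e2 : ∑ s ∈ S.filter (fun s => ¬ (S ∩ outset T s).card = 3),
          (S ∩ outset T s).card = 0 := by
        apply Finset.sum_eq_zero
        intro s hs
        obtain ⟨hsS, hne3⟩ := mem_filter.mp hs
        rcases hos s hsS with h | h
        · exact h
        · exact absurd h hne3
      rw [e1, e2]
      omega
    have hT3card : T3.card = 2 := by
      rw [hsum3, hScard] at harcsS
      omega
    have h1lt : 1 < T3.card := by omega
    obtain ⟨a, ha, b, hb, hab⟩ := Finset.one_lt_card.mp h1lt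
    have haS : a ∈ S := (mem_filter.mp ha).1
    have hbS : b ∈ S := (mem_filter.mp hb).1
    have hfull : ∀ c, c ∈ T3 → S ∩ outset T c = S.erase c := by
      intro c hc
      obtain ⟨hcS, hc3⟩ := mem_filter.mp hc
      apply Finset.eq_of_subset_of_card_le
      · intro x hx
        refine mem_erase.mpr ⟨?_, (mem_inter.mp hx).1⟩
        rintro rfl
        exact not_self_mem_outset (mem_inter.mp hx).2
      · rw [Finset.card_erase_of_mem hcS, hScard, hc3]
    have hba : b ∈ outset T a := by
      have := hfull a ha
      have hbmem : b ∈ S.erase a := mem_erase.mpr ⟨hab.symm, hbS⟩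
      rw [← this] at hbmem
      exact (mem_inter.mp hbmem).2
    have hab2 : a ∈ outset T b := by
      have := hfull b hb
      have hamem : a ∈ S.erase b := mem_erase.mpr ⟨hab, haS⟩
      rw [← this] at hamem
      exact (mem_inter.mp hamem).2
    exact not_both (mem_outset.mp hba) (mem_outset.mp hab2)
  · -- |S| = 5, |R| = 3
    have hScard : S.card = 5 := hdq
    have hRcard : R.card = 3 := by omega
    have hos : ∀ s ∈ S, (S ∩ outset T s).card = 0 ∨ (S ∩ outset T s).card = 4 := by
      intro s hsS
      obtain ⟨⟨h1, h2⟩, ⟨h3, h4⟩, h5, h6, h7⟩ := key s hsS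
      have := hdlo s
      have := hdhi s
      omega
    set T4 := S.filter (fun s => (S ∩ outset T s).card = 4) with hT4
    have hsum4 : ∑ s ∈ S, (S ∩ outset T s).card = 4 * T4.card := by
      rw [← Finset.sum_filter_add_sum_filter_not S
        (fun s => (S ∩ outset T s).card = 4)]
      have e1 : ∑ s ∈ T4, (S ∩ outset T s).card = 4 * T4.card := by
        rw [Finset.sum_congr rfl (fun s hs => (mem_filter.mp hs).2),
          Finset.sum_const, smul_eq_mul, mul_comm]
      have e2 : ∑ s ∈ S.filter (fun s => ¬ (S ∩ outset T s).card = 4),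
          (S ∩ outset T s).card = 0 := by
        apply Finset.sum_eq_zero
        intro s hs
        obtain ⟨hsS, hne4⟩ := mem_filter.mp hs
        rcases hos s hsS with h | h
        · exact h
        · exact absurd h hne4
      rw [e1, e2]
      omega
    rw [hsum4, hScard] at harcsS
    omega

theorem stmt_4 (T : Tournament V) (hcard : Fintype.card V = 10)
    (hnr : NearRegular T) (hq : Quadrangular T) : False := by
  classical
  obtain ⟨houtq, hinq⟩ := hq
  have hdeg9 : ∀ v : V, (outset T v).card + (inset T v).card = 9 := by
    intro v; have := deg_add T v; rw [hcard] at this; omega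
  have hsumdeg : ∑ v ∈ univ, (outset T v).card = 45 := by
    have h0 := arcs T univ
    have huniv : ∀ s : V, univ ∩ outset T s = outset T s := fun s =>
      Finset.inter_eq_right.mpr (subset_univ _)
    rw [Finset.sum_congr rfl (fun s _ => congrArg Finset.card (huniv s)),
      Finset.card_univ, hcard] at h0
    omega
  have hVne : (univ : Finset V).Nonempty := by
    rw [← Finset.card_pos, Finset.card_univ, hcard]; norm_num
  obtain ⟨u, hu, hmin⟩ := Finset.exists_min_image univ (fun v => (outset T v).card) hVne
  have h10min : 10 * (outset T u).card ≤ 45 := by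
    have := Finset.card_nsmul_le_sum univ (fun v => (outset T v).card)
      ((outset T u).card) (fun v hv => hmin v hv)
    rw [Finset.card_univ, hcard, smul_eq_mul] at this
    omega
  have h45le : 45 ≤ 10 * ((outset T u).card + 1) := by
    have := Finset.sum_le_card_nsmul univ (fun v => (outset T v).card)
      ((outset T u).card + 1) (fun v _ => hnr v u)
    rw [Finset.card_univ, hcard, smul_eq_mul] at this
    omega
  have hdu : (outset T u).card = 4 := by omega
  have hdlo : ∀ v : V, 4 ≤ (outset T v).card := by
    intro v; have := hmin v (mem_univ v); omega
  have hdhi : ∀ v : V, (outset T v).card ≤ 5 := by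
    intro v; have := hnr v u; omega
  -- find w with no common out-neighbour with u
  have hbound : ∑ x ∈ outset T u, ((inset T x).card - 1) ≤ 16 := by
    have h4 : ∀ x ∈ outset T u, (inset T x).card - 1 ≤ 4 := by
      intro x _
      have := hdeg9 x
      have := hdlo x
      omega
    have := Finset.sum_le_card_nsmul (outset T u)
      (fun x => (inset T x).card - 1) 4 h4
    rw [hdu, smul_eq_mul] at this
    omega
  have hexists : ∃ w ∈ univ.erase u, (outset T u ∩ outset T w).card = 0 := by
    by_contra hcon
    push_neg at hcon
    have h2le : ∀ w ∈ univ.erase u, 2 ≤ (outset T u ∩ outset T w).card := by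
      intro w hw
      have hwne : w ≠ u := (mem_erase.mp hw).1
      have := houtq u w (Ne.symm hwne)
      have := hcon w hw
      omega
    have h18 := Finset.card_nsmul_le_sum (univ.erase u)
      (fun w => (outset T u ∩ outset T w).card) 2 h2le
    rw [Finset.card_erase_of_mem (mem_univ u), Finset.card_univ, hcard,
      smul_eq_mul, sum_common_out] at h18
    omega
  obtain ⟨w, hw, hcard0⟩ := hexists
  have hne : u ≠ w := Ne.symm (mem_erase.mp hw).1
  have hOuw : outset T u ∩ outset T w = ∅ := Finset.card_eq_zero.mp hcard0
  have hbne1 : (inset T u ∩ inset T w).card ≠ 1 := hinq u w hne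
  rcases beats_total (T := T) hne with hb | hb
  · -- u beats w
    have hpc := pair_count T hcard hb hOuw
    have hdw : (outset T w).card = 5 := by
      have := hdhi w; have := hdlo w; omega
    have hIuw : inset T u ∩ inset T w = ∅ := Finset.card_eq_zero.mp (by omega)
    exact core T hcard houtq hinq hdlo hdhi hb (by omega) hOuw hIuw
  · -- w beats u
    have hOwu : outset T w ∩ outset T u = ∅ := by rwa [Finset.inter_comm]
    have hpc := pair_count T hcard hb hOwu
    have hbne1' : (inset T w ∩ inset T u).card ≠ 1 := by
      rwa [Finset.inter_comm]
    have hdw : (outset T w).card = 5 := by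
      have := hdhi w; have := hdlo w; omega
    have hIwu : inset T w ∩ inset T u = ∅ := Finset.card_eq_zero.mp (by omega)
    exact core T hcard houtq hinq hdlo hdhi hb (by omega) hOwu hIwu
end

section
/- No tournament on 9 vertices with minimum out-degree at least 2 is out-quadrangular. -/
open Finset

variable {V : Type} [Fintype V] [DecidableEq V]

namespace Stmt8Aux

variable {V : Type} [Fintype V] [DecidableEq V]

lemma mem_outset {T : Tournament V} {v u : V} : u ∈ outset T v ↔ T.beats v u = true := by
  simp [outset]

lemma mem_inset {T : Tournament V} {v u : V} : u ∈ inset T v ↔ T.beats u v = true := by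
  simp [inset]

lemma ne_of_beats {T : Tournament V} {u v : V} (h : T.beats u v = true) : u ≠ v := by
  rintro rfl
  rw [T.irrefl] at h
  exact Bool.noConfusion h

lemma beats_total {T : Tournament V} {u v : V} (h : u ≠ v) (hb : ¬ T.beats u v = true) :
    T.beats v u = true := by
  have ha := T.asymm u v h
  cases h2 : T.beats v u
  · rw [h2] at ha
    simp at ha
    exact absurd ha hb
  · rfl

lemma not_both {T : Tournament V} {u v : V} (h1 : T.beats u v = true)
    (h2 : T.beats v u = true) : False := by
  have hne : u ≠ v := ne_of_beats h1
  have := T.asymm u v hne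
  rw [h1, h2] at this
  simp at this

lemma two_mul_sum (T : Tournament V) (S : Finset V) :
    2 * (∑ u ∈ S, (outset T u ∩ S).card) + S.card = S.card * S.card := by
  have hcardf : ∀ u : V, (outset T u ∩ S).card
      = ∑ w ∈ S, (if T.beats u w = true then (1:ℕ) else 0) := by
    intro u
    rw [show outset T u ∩ S = S.filter (fun w => T.beats u w = true) by
      ext w; simp [outset, and_comm]]
    exact Finset.card_filter _ _
  have key : ∑ u ∈ S, ∑ w ∈ S,
      ((if T.beats u w = true then (1:ℕ) else 0) + (if T.beats w u = true then (1:ℕ) else 0)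
        + (if u = w then (1:ℕ) else 0)) = S.card * S.card := by
    rw [show S.card * S.card = ∑ _u ∈ S, ∑ _w ∈ S, (1:ℕ) by simp [mul_comm]]
    refine Finset.sum_congr rfl fun u _ => Finset.sum_congr rfl fun w _ => ?_
    by_cases h : u = w
    · subst h; simp [T.irrefl]
    · cases hb : T.beats u w
      · have h2 : T.beats w u = true := beats_total h (by simp [hb])
        simp [hb, h2, h]
      · have h2 : T.beats w u = false := by
          have := T.asymm w u (Ne.symm h)
          rw [hb] at this
          simpa using this
        simp [hb, h2, h]
  have hsplit : ∑ u ∈ S, ∑ w ∈ S,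
      ((if T.beats u w = true then (1:ℕ) else 0) + (if T.beats w u = true then (1:ℕ) else 0)
        + (if u = w then (1:ℕ) else 0))
      = (∑ u ∈ S, ∑ w ∈ S, (if T.beats u w = true then (1:ℕ) else 0))
        + (∑ u ∈ S, ∑ w ∈ S, (if T.beats w u = true then (1:ℕ) else 0))
        + (∑ u ∈ S, ∑ w ∈ S, (if u = w then (1:ℕ) else 0)) := by
    rw [← Finset.sum_add_distrib, ← Finset.sum_add_distrib]
    refine Finset.sum_congr rfl fun u _ => ?_
    rw [← Finset.sum_add_distrib, ← Finset.sum_add_distrib]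
  have h1 : (∑ u ∈ S, ∑ w ∈ S, (if T.beats u w = true then (1:ℕ) else 0))
      = ∑ u ∈ S, (outset T u ∩ S).card :=
    Finset.sum_congr rfl fun u _ => (hcardf u).symm
  have h2 : (∑ u ∈ S, ∑ w ∈ S, (if T.beats w u = true then (1:ℕ) else 0))
      = ∑ u ∈ S, (outset T u ∩ S).card := by
    rw [Finset.sum_comm]
    exact Finset.sum_congr rfl fun u _ => (hcardf u).symm
  have h3 : (∑ u ∈ S, ∑ w ∈ S, (if u = w then (1:ℕ) else 0)) = S.card := by
    have : ∀ u ∈ S, (∑ w ∈ S, (if u = w then (1:ℕ) else 0)) = 1 := by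
      intro u hu
      rw [Finset.sum_ite_eq]
      simp [hu]
    rw [Finset.sum_congr rfl this]
    simp
  rw [hsplit, h1, h2, h3] at key
  omega

lemma deg_ne_one (T : Tournament V) (hq : OutQuadrangular T) {v u : V}
    (hu : u ∈ outset T v) : (outset T u ∩ outset T v).card ≠ 1 :=
  hq u v (ne_of_beats (mem_outset.mp hu)).symm

lemma inter_subset_erase (T : Tournament V) (u : V) (S : Finset V) :
    outset T u ∩ S ⊆ S.erase u := by
  intro w hw
  rw [Finset.mem_inter] at hw
  rw [Finset.mem_erase]
  exact ⟨(ne_of_beats (mem_outset.mp hw.1)).symm, hw.2⟩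

lemma card_outset_ge (T : Tournament V) (hq : OutQuadrangular T)
    (hmin : ∀ v : V, 2 ≤ (outset T v).card) (v : V) : 4 ≤ (outset T v).card := by
  set S := outset T v with hS
  have hsum := two_mul_sum T S
  have hne1 : ∀ u ∈ S, (outset T u ∩ S).card ≠ 1 := fun u hu => deg_ne_one T hq hu
  have hle : ∀ u ∈ S, (outset T u ∩ S).card ≤ S.card - 1 := by
    intro u hu
    calc (outset T u ∩ S).card ≤ (S.erase u).card :=
          Finset.card_le_card (inter_subset_erase T u S)
      _ = S.card - 1 := Finset.card_erase_of_mem hu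
  by_contra hlt
  push_neg at hlt
  have h2 : 2 ≤ S.card := by rw [hS]; exact hmin v
  rcases (by omega : S.card = 2 ∨ S.card = 3) with h | h
  · rw [h] at hsum
    obtain ⟨a, b, hab, hSab⟩ := Finset.card_eq_two.mp h
    have haS : a ∈ S := by rw [hSab]; simp
    have hbS : b ∈ S := by rw [hSab]; simp
    have hsum2 : (outset T a ∩ S).card + (outset T b ∩ S).card
        = ∑ u ∈ S, (outset T u ∩ S).card := by
      rw [hSab, Finset.sum_pair hab]
    have h1a := hne1 a haS; have h1b := hne1 b hbS
    have h2a := hle a haS; have h2b := hle b hbS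
    omega
  · rw [h] at hsum
    obtain ⟨a, b, c, hab, hac, hbc, hSab⟩ := Finset.card_eq_three.mp h
    have haS : a ∈ S := by rw [hSab]; simp
    have hbS : b ∈ S := by rw [hSab]; simp
    have hcS : c ∈ S := by rw [hSab]; simp
    have hsum3 : (outset T a ∩ S).card + (outset T b ∩ S).card + (outset T c ∩ S).card
        = ∑ u ∈ S, (outset T u ∩ S).card := by
      rw [hSab, Finset.sum_insert (by simp [hab, hac]), Finset.sum_insert (by simp [hbc]),
        Finset.sum_singleton]
      ring
    have h1a := hne1 a haS; have h1b := hne1 b hbS; have h1c := hne1 c hcS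
    have h2a := hle a haS; have h2b := hle b hbS; have h2c := hle c hcS
    omega

lemma card_outset_eq (T : Tournament V) (hq : OutQuadrangular T)
    (hcard : Fintype.card V = 9) (hmin : ∀ v : V, 2 ≤ (outset T v).card) (v : V) :
    (outset T v).card = 4 := by
  have h4 := card_outset_ge T hq hmin
  have huniv : (Finset.univ : Finset V).card = 9 := by rw [Finset.card_univ, hcard]
  have hsum := two_mul_sum T Finset.univ
  simp only [Finset.inter_univ] at hsum
  rw [huniv] at hsum
  by_contra hv
  have hv5 : 4 < (outset T v).card := lt_of_le_of_ne (h4 v) (Ne.symm hv)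
  have hlt : ∑ _u : V, 4 < ∑ u : V, (outset T u).card :=
    Finset.sum_lt_sum (fun i _ => h4 i) ⟨v, Finset.mem_univ v, hv5⟩
  have h36 : (∑ _u : V, (4:ℕ)) = 36 := by
    rw [Finset.sum_const, huniv]
    rfl
  omega

lemma exists_sink (T : Tournament V) (hq : OutQuadrangular T)
    (hreg : ∀ w : V, (outset T w).card = 4) (v : V) :
    ∃ x ∈ outset T v, outset T x ∩ outset T v = ∅ ∧
      (∀ u ∈ outset T v, u ≠ x → T.beats u x = true) ∧
      (∀ u ∈ outset T v, u ≠ x → ∃ a ∈ outset T v, a ≠ x ∧ T.beats u a = true) := by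
  set S := outset T v with hS
  have hS4 : S.card = 4 := hreg v
  have hsum := two_mul_sum T S
  rw [hS4] at hsum
  have hD : ∑ u ∈ S, (outset T u ∩ S).card = 6 := by omega
  have hne1 : ∀ u ∈ S, (outset T u ∩ S).card ≠ 1 := fun u hu => deg_ne_one T hq hu
  have hx : ∃ x ∈ S, (outset T x ∩ S).card = 0 := by
    by_contra hno
    push_neg at hno
    have hge2 : ∀ u ∈ S, 2 ≤ (outset T u ∩ S).card := by
      intro u hu
      have := hno u hu
      have := hne1 u hu
      omega
    have h8 : (8:ℕ) ≤ ∑ u ∈ S, (outset T u ∩ S).card := by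
      calc (8:ℕ) = ∑ _u ∈ S, 2 := by rw [Finset.sum_const, hS4]; rfl
        _ ≤ _ := Finset.sum_le_sum hge2
    omega
  obtain ⟨x, hxS, hx0⟩ := hx
  have hempty : outset T x ∩ S = ∅ := Finset.card_eq_zero.mp hx0
  have hbeatsx : ∀ u ∈ S, u ≠ x → T.beats u x = true := by
    intro u hu hux
    by_contra hb
    have hxu : T.beats x u = true := beats_total hux hb
    have : u ∈ outset T x ∩ S := Finset.mem_inter.mpr ⟨mem_outset.mpr hxu, hu⟩
    rw [hempty] at this
    exact absurd this (Finset.notMem_empty u)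
  refine ⟨x, hxS, hempty, hbeatsx, ?_⟩
  intro u hu hux
  have hx_mem : x ∈ outset T u ∩ S :=
    Finset.mem_inter.mpr ⟨mem_outset.mpr (hbeatsx u hu hux), hxS⟩
  have h2 : 2 ≤ (outset T u ∩ S).card := by
    have h1 : 1 ≤ (outset T u ∩ S).card := Finset.card_pos.mpr ⟨x, hx_mem⟩
    have := hne1 u hu
    omega
  have hpos : 0 < ((outset T u ∩ S).erase x).card := by
    rw [Finset.card_erase_of_mem hx_mem]
    omega
  obtain ⟨a, ha⟩ := Finset.card_pos.mp hpos
  rw [Finset.mem_erase, Finset.mem_inter] at ha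
  exact ⟨a, ha.2.2, ha.1, mem_outset.mp ha.2.1⟩

lemma card_outset_add_card_inset (T : Tournament V) (v : V) :
    (outset T v).card + (inset T v).card = Fintype.card V - 1 := by
  have hdisj : Disjoint (outset T v) (inset T v) := by
    rw [Finset.disjoint_left]
    intro u hu1 hu2
    exact not_both (mem_inset.mp hu2) (mem_outset.mp hu1)
  have hunion : outset T v ∪ inset T v = Finset.univ.erase v := by
    ext u
    simp only [Finset.mem_union, Finset.mem_erase, Finset.mem_univ, and_true]
    constructor
    · rintro (h | h)
      · exact (ne_of_beats (mem_outset.mp h)).symm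
      · exact ne_of_beats (mem_inset.mp h)
    · intro h
      cases hb : T.beats v u
      · exact Or.inr (mem_inset.mpr (beats_total (Ne.symm h) (by simp [hb])))
      · exact Or.inl (mem_outset.mpr hb)
  rw [← Finset.card_union_of_disjoint hdisj, hunion,
    Finset.card_erase_of_mem (Finset.mem_univ v), Finset.card_univ]

end Stmt8Aux


theorem stmt_8 (T : Tournament V) (hcard : Fintype.card V = 9)
    (hmin : ∀ v : V, 2 ≤ (outset T v).card) :
    ¬ OutQuadrangular T := by
  intro hq
  have hreg : ∀ w : V, (outset T w).card = 4 :=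
    fun w => Stmt8Aux.card_outset_eq T hq hcard hmin w
  have hinset : ∀ w : V, (inset T w).card = 4 := by
    intro w
    have := Stmt8Aux.card_outset_add_card_inset T w
    rw [hreg w, hcard] at this
    omega
  have hsinkout : ∀ v x : V, x ∈ outset T v → outset T x ∩ outset T v = ∅ →
      outset T x = inset T v := by
    intro v x hx hempty
    apply Finset.eq_of_subset_of_card_le
    · intro u hu
      have hbxu : T.beats x u = true := Stmt8Aux.mem_outset.mp hu
      have hvx : T.beats v x = true := Stmt8Aux.mem_outset.mp hx
      have huv : u ≠ v := by
        rintro rfl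
        exact Stmt8Aux.not_both hbxu hvx
      have hnotin : u ∉ outset T v := by
        intro h
        have hmem : u ∈ outset T x ∩ outset T v := Finset.mem_inter.mpr ⟨hu, h⟩
        rw [hempty] at hmem
        exact absurd hmem (Finset.notMem_empty u)
      have hnb : ¬ T.beats v u = true := fun h => hnotin (Stmt8Aux.mem_outset.mpr h)
      exact Stmt8Aux.mem_inset.mpr (Stmt8Aux.beats_total (Ne.symm huv) hnb)
    · rw [hreg, hinset]
  have hne : Nonempty V := by
    rw [← Fintype.card_pos_iff]
    omega
  obtain ⟨v⟩ := hne
  obtain ⟨x, hxv, hxe, hxbeat, hxcyc⟩ := Stmt8Aux.exists_sink T hq hreg v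
  obtain ⟨y, hyx, hye, hybeat, hycyc⟩ := Stmt8Aux.exists_sink T hq hreg x
  obtain ⟨z, hzy, hze, hzbeat, hzcyc⟩ := Stmt8Aux.exists_sink T hq hreg y
  have hOy : outset T y = inset T x := hsinkout x y hyx hye
  have hvnot : v ∉ (outset T v).erase x := by
    intro h
    have hb := Stmt8Aux.mem_outset.mp (Finset.mem_of_mem_erase h)
    rw [T.irrefl] at hb
    exact Bool.noConfusion hb
  have hsub : insert v ((outset T v).erase x) ⊆ inset T x := by
    intro u hu
    rw [Finset.mem_insert] at hu
    rcases hu with rfl | hu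
    · exact Stmt8Aux.mem_inset.mpr (Stmt8Aux.mem_outset.mp hxv)
    · rw [Finset.mem_erase] at hu
      exact Stmt8Aux.mem_inset.mpr (hxbeat u hu.2 hu.1)
  have hcards : (insert v ((outset T v).erase x)).card = 4 := by
    rw [Finset.card_insert_of_notMem hvnot, Finset.card_erase_of_mem hxv, hreg]
  have hIx : insert v ((outset T v).erase x) = inset T x :=
    Finset.eq_of_subset_of_card_le hsub (by rw [hinset, hcards])
  have hz' : z ∈ insert v ((outset T v).erase x) := by
    rw [hIx, ← hOy]
    exact hzy
  rw [Finset.mem_insert] at hz'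
  rcases hz' with hzv | hz'
  · have hpos : 0 < ((outset T v).erase x).card := by
      rw [Finset.card_erase_of_mem hxv, hreg]
      omega
    obtain ⟨a, ha⟩ := Finset.card_pos.mp hpos
    have haOz : a ∈ outset T z := by
      rw [hzv]
      exact Finset.mem_of_mem_erase ha
    have haOy : a ∈ outset T y := by
      rw [hOy, ← hIx]
      exact Finset.mem_insert_of_mem ha
    have hmem : a ∈ outset T z ∩ outset T y := Finset.mem_inter.mpr ⟨haOz, haOy⟩
    rw [hze] at hmem
    exact absurd hmem (Finset.notMem_empty a)
  · rw [Finset.mem_erase] at hz'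
    obtain ⟨a, haO, hax, hba⟩ := hxcyc z hz'.2 hz'.1
    have haOz : a ∈ outset T z := Stmt8Aux.mem_outset.mpr hba
    have haOy : a ∈ outset T y := by
      rw [hOy, ← hIx]
      exact Finset.mem_insert_of_mem (Finset.mem_erase.mpr ⟨hax, haO⟩)
    have hmem : a ∈ outset T z ∩ outset T y := Finset.mem_inter.mpr ⟨haOz, haOy⟩
    rw [hze] at hmem
    exact absurd hmem (Finset.notMem_empty a)
end

section
/- Let T be a rotational tournament on n ≥ 5 vertices with symbol S. Then T is quadrangular if and only if for every integer m with 1 ≤ m ≤ (n−1)/2 there exist two distinct 2-element subsets {i,j}, {k,l} of S with i − j ≡ k − l ≡ m (mod n). -/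
open Finset

variable {V : Type} [Fintype V] [DecidableEq V]

namespace Stmt11Aux

variable {n : ℕ} [NeZero n]

def N (S : Finset (ZMod n)) (e : ZMod n) : ℕ := (S.filter (fun j => j + e ∈ S)).card

omit [NeZero n] in
lemma N_neg (S : Finset (ZMod n)) (e : ZMod n) : N S (-e) = N S e := by
  unfold N
  apply Finset.card_nbij (i := fun j => j + -e)
  · intro j hj
    simp only [Finset.coe_filter, Set.mem_setOf_eq, mem_filter] at hj ⊢
    refine ⟨hj.2, ?_⟩
    simpa using hj.1
  · intro a _ b _ hab
    simpa using hab
  · intro a ha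
    simp only [Finset.coe_filter, Set.mem_setOf_eq, Set.mem_image] at ha ⊢
    exact ⟨a + e, ⟨ha.2, by simpa using ha.1⟩, by ring⟩

omit [NeZero n] in
lemma N_zero (S : Finset (ZMod n)) : N S 0 = S.card := by
  unfold N
  congr 1
  simp [Finset.filter_eq_self]



lemma inter_card_out (S : Finset (ZMod n)) (T : Tournament (ZMod n))
    (hT : ∀ i j : ZMod n, T.beats i j = true ↔ j - i ∈ S) (u v : ZMod n) :
    (outset T u ∩ outset T v).card = N S (v - u) := by
  unfold N
  apply Finset.card_bij' (i := fun w _ => w - v) (j := fun j _ => j + v)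
  · intro w hw
    simp only [outset, Finset.mem_inter, Finset.mem_filter, Finset.mem_univ, true_and, hT] at hw
    simp only [Finset.mem_filter]
    exact ⟨hw.2, by rw [show w - v + (v - u) = w - u by ring]; exact hw.1⟩
  · intro j hj
    simp only [Finset.mem_filter] at hj
    simp only [outset, Finset.mem_inter, Finset.mem_filter, Finset.mem_univ, true_and, hT]
    exact ⟨by rw [show j + v - u = j + (v - u) by ring]; exact hj.2, by simpa using hj.1⟩
  · intro w _; ring
  · intro j _; ring

lemma inter_card_in (S : Finset (ZMod n)) (T : Tournament (ZMod n))
    (hT : ∀ i j : ZMod n, T.beats i j = true ↔ j - i ∈ S) (u v : ZMod n) :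
    (inset T u ∩ inset T v).card = N S (v - u) := by
  unfold N
  apply Finset.card_bij' (i := fun w _ => u - w) (j := fun j _ => u - j)
  · intro w hw
    simp only [inset, Finset.mem_inter, Finset.mem_filter, Finset.mem_univ, true_and, hT] at hw
    simp only [Finset.mem_filter]
    exact ⟨hw.1, by rw [show u - w + (v - u) = v - w by ring]; exact hw.2⟩
  · intro j hj
    simp only [Finset.mem_filter] at hj
    simp only [inset, Finset.mem_inter, Finset.mem_filter, Finset.mem_univ, true_and, hT]
    exact ⟨by simpa using hj.1, by rw [show v - (u - j) = j + (v - u) by ring]; exact hj.2⟩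
  · intro w _; ring
  · intro j _; ring

end Stmt11Aux

open Stmt11Aux in
theorem stmt_11 (n : ℕ) [NeZero n] (hn : 5 ≤ n) (hodd : Odd n)
    (S : Finset (ZMod n)) (hScard : S.card = (n - 1) / 2)
    (hsym : ∀ i ∈ S, ∀ j ∈ S, i + j ≠ 0)
    (T : Tournament (ZMod n))
    (hT : ∀ i j : ZMod n, T.beats i j = true ↔ j - i ∈ S) :
    Quadrangular T ↔
      ∀ m : ℕ, 1 ≤ m → m ≤ (n - 1) / 2 →
        ∃ i ∈ S, ∃ j ∈ S, ∃ k ∈ S, ∃ l ∈ S,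
          i - j = (m : ZMod n) ∧ k - l = (m : ZMod n) ∧
          ({i, j} : Finset (ZMod n)) ≠ {k, l} := by
  obtain ⟨t, ht⟩ := hodd
  have h0S : (0 : ZMod n) ∉ S := fun h => hsym 0 h 0 h (add_zero 0)
  -- trichotomy: every nonzero x has x ∈ S or -x ∈ S
  have htri : ∀ x : ZMod n, x ≠ 0 → x ∈ S ∨ -x ∈ S := by
    intro x hx
    have hdisj : Disjoint S (S.image (fun y => -y)) := by
      rw [Finset.disjoint_left]
      intro a haS ha
      obtain ⟨y, hy, rfl⟩ := Finset.mem_image.mp ha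
      exact hsym _ hy _ haS (by ring)
    have hsub : S ∪ S.image (fun y => -y) ⊆ (univ : Finset (ZMod n)).erase 0 := by
      intro a ha
      rcases Finset.mem_union.mp ha with h | h
      · exact Finset.mem_erase.mpr ⟨fun h0 => h0S (h0 ▸ h), Finset.mem_univ _⟩
      · obtain ⟨y, hy, rfl⟩ := Finset.mem_image.mp h
        refine Finset.mem_erase.mpr ⟨fun h0 => h0S ?_, Finset.mem_univ _⟩
        rw [neg_eq_zero] at h0
        exact h0 ▸ hy
    have hcards : ((univ : Finset (ZMod n)).erase 0).card ≤ (S ∪ S.image (fun y => -y)).card := by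
      rw [Finset.card_union_of_disjoint hdisj,
        Finset.card_image_of_injective _ neg_injective, hScard,
        Finset.card_erase_of_mem (Finset.mem_univ _), Finset.card_univ, ZMod.card]
      omega
    have heq := Finset.eq_of_subset_of_card_le hsub hcards
    have hx' : x ∈ S ∪ S.image (fun y => -y) := by
      rw [heq]; exact Finset.mem_erase.mpr ⟨hx, Finset.mem_univ _⟩
    rcases Finset.mem_union.mp hx' with h | h
    · exact Or.inl h
    · obtain ⟨y, hy, hxy⟩ := Finset.mem_image.mp h
      right; rw [← hxy]; simpa using hy
  -- Quadrangular iff N ≠ 1 off zero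
  have hquadN : Quadrangular T ↔ ∀ x : ZMod n, x ≠ 0 → N S x ≠ 1 := by
    constructor
    · intro hq x hx
      have := hq.1 0 x (Ne.symm hx)
      rwa [inter_card_out S T hT 0 x, sub_zero] at this
    · intro h
      constructor
      · intro u v huv
        rw [inter_card_out S T hT u v]
        exact h _ (sub_ne_zero_of_ne (Ne.symm huv))
      · intro u v huv
        rw [inter_card_in S T hT u v]
        exact h _ (sub_ne_zero_of_ne (Ne.symm huv))
  -- nat casts in range are nonzero
  have hcast : ∀ m : ℕ, 1 ≤ m → m ≤ (n - 1) / 2 → (m : ZMod n) ≠ 0 := by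
    intro m h1 h2 h0
    have := (ZMod.natCast_eq_zero_iff m n).mp h0
    have := Nat.le_of_dvd (by omega) this
    omega
  have hcast2 : ∀ m : ℕ, 1 ≤ m → m ≤ (n - 1) / 2 → (m : ZMod n) + m ≠ 0 := by
    intro m h1 h2 h0
    have h0' : ((m + m : ℕ) : ZMod n) = 0 := by push_cast; exact h0
    have := (ZMod.natCast_eq_zero_iff (m + m) n).mp h0'
    have := Nat.le_of_dvd (by omega) this
    omega
  -- RHS condition at m iff 2 ≤ N S m
  have hrhs : ∀ m : ℕ, 1 ≤ m → m ≤ (n - 1) / 2 →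
      ((∃ i ∈ S, ∃ j ∈ S, ∃ k ∈ S, ∃ l ∈ S,
          i - j = (m : ZMod n) ∧ k - l = (m : ZMod n) ∧
          ({i, j} : Finset (ZMod n)) ≠ {k, l}) ↔ 2 ≤ N S (m : ZMod n)) := by
    intro m h1 h2
    constructor
    · rintro ⟨i, hi, j, hj, k, hk, l, hl, hij, hkl, hne⟩
      have hij' : i = j + m := by rw [← hij]; ring
      have hkl' : k = l + m := by rw [← hkl]; ring
      have hjl : j ≠ l := by
        rintro rfl
        exact hne (by rw [hij', hkl'])
      show 2 ≤ (S.filter (fun j => j + (m : ZMod n) ∈ S)).card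
      have : 1 < (S.filter (fun j => j + (m : ZMod n) ∈ S)).card :=
        Finset.one_lt_card.mpr
          ⟨j, Finset.mem_filter.mpr ⟨hj, by rw [← hij']; exact hi⟩,
           l, Finset.mem_filter.mpr ⟨hl, by rw [← hkl']; exact hk⟩, hjl⟩
      omega
    · intro h2N
      have h2N' : 1 < (S.filter (fun j => j + (m : ZMod n) ∈ S)).card := h2N
      obtain ⟨j, hj, l, hl, hjl⟩ := Finset.one_lt_card.mp h2N'
      rw [Finset.mem_filter] at hj hl
      refine ⟨j + m, hj.2, j, hj.1, l + m, hl.2, l, hl.1, by ring, by ring, ?_⟩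
      intro heq
      have hjmem : j ∈ ({l + (m:ZMod n), l} : Finset (ZMod n)) := by
        rw [← heq]; simp
      rcases Finset.mem_insert.mp hjmem with hjlm | hjl'
      · -- j = l + m ; then j + m ∈ {l+m, l} forces j + m = l, so m + m = 0
        have hjm : j + (m : ZMod n) ∈ ({l + (m:ZMod n), l} : Finset (ZMod n)) := by
          rw [← heq]; simp
        rcases Finset.mem_insert.mp hjm with h' | h'
        · exact hjl (by exact add_right_cancel h')
        · rw [Finset.mem_singleton] at h'
          apply hcast2 m h1 h2
          have hll : l + (m:ZMod n) + m = l := by rw [← hjlm]; exact h'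
          linear_combination hll
      · rw [Finset.mem_singleton] at hjl'
        exact hjl hjl'
  constructor
  · -- Quadrangular → RHS
    intro hq m h1 h2
    rw [hrhs m h1 h2]
    have hN1 := (hquadN.mp hq) _ (hcast m h1 h2)
    rcases Nat.lt_or_ge (N S (m : ZMod n)) 2 with hlt | hge
    · exfalso
      have hN0 : N S (m : ZMod n) = 0 := by omega
      -- get d ∈ S with N S d = 0
      obtain ⟨d, hdS, hNd⟩ : ∃ d, d ∈ S ∧ N S d = 0 := by
        rcases htri _ (hcast m h1 h2) with h | h
        · exact ⟨_, h, hN0⟩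
        · exact ⟨_, h, by rw [N_neg]; exact hN0⟩
      have hempty : ∀ j ∈ S, j + d ∉ S := by
        intro j hj hjd
        have : (S.filter (fun j => j + d ∈ S)) = ∅ := Finset.card_eq_zero.mp hNd
        have := Finset.eq_empty_iff_forall_notMem.mp this j
        exact this (Finset.mem_filter.mpr ⟨hj, hjd⟩)
      -- the involution equivalence
      have hE1 : ∀ x, x ∈ S → -x - d ∈ S := by
        intro x hx
        have hxd0 : x + d ≠ 0 := hsym x hx d hdS
        rcases htri _ hxd0 with h | h
        · exact absurd h (hempty x hx)
        · rwa [show -(x+d) = -x - d by ring] at h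
      have hE : ∀ x, x ∈ S ↔ -x - d ∈ S := by
        intro x
        refine ⟨hE1 x, fun h => ?_⟩
        have := hE1 _ h
        rwa [show -(-x - d) - d = x by ring] at this
      -- key identity
      have hkey : ∀ e : ZMod n, N S e + N S (e - d) + (if -e ∈ S then 1 else 0) = (n-1)/2 := by
        intro e
        have hsplit1 : (S.filter (fun j => j + e ∈ S)).card
            + (S.filter (fun j => ¬ (j + e ∈ S))).card = S.card :=
          Finset.card_filter_add_card_filter_not _
        have hsplit2 : ((S.filter (fun j => ¬ (j + e ∈ S))).filter (fun j => j = -e)).card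
            + ((S.filter (fun j => ¬ (j + e ∈ S))).filter (fun j => ¬ j = -e)).card
            = (S.filter (fun j => ¬ (j + e ∈ S))).card :=
          Finset.card_filter_add_card_filter_not _
        have he2 : (S.filter (fun j => ¬ (j + e ∈ S))).filter (fun j => j = -e)
            = S.filter (fun j => j = -e) := by
          ext j
          simp only [Finset.mem_filter]
          constructor
          · rintro ⟨⟨hj, _⟩, h2⟩; exact ⟨hj, h2⟩
          · rintro ⟨hj, rfl⟩
            exact ⟨⟨hj, by rw [neg_add_cancel]; exact h0S⟩, rfl⟩
        have he3 : (S.filter (fun j => ¬ (j + e ∈ S))).filter (fun j => ¬ j = -e)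
            = S.filter (fun j => j + (e - d) ∈ S) := by
          ext j
          simp only [Finset.mem_filter]
          constructor
          · rintro ⟨⟨hj, hnot⟩, hne⟩
            refine ⟨hj, ?_⟩
            have hje0 : j + e ≠ 0 := fun h => hne (by linear_combination h)
            rcases htri _ hje0 with h | h
            · exact absurd h hnot
            · have := (hE (j + (e - d))).mpr (by rwa [show -(j + (e - d)) - d = -(j+e) by ring])
              exact this
          · rintro ⟨hj, hjed⟩
            have hneg : -(j + e) ∈ S := by
              have := (hE (j + (e - d))).mp hjed
              rwa [show -(j + (e - d)) - d = -(j+e) by ring] at this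
            refine ⟨⟨hj, fun hmem => hsym _ hmem _ hneg (by ring)⟩, fun hje => ?_⟩
            rw [hje, neg_add_cancel] at hneg
            rw [neg_zero] at hneg
            exact h0S hneg
        have he4 : (S.filter (fun j => j = -e)).card = (if -e ∈ S then 1 else 0) := by
          rw [Finset.filter_eq' S (-e)]
          split <;> simp
        rw [he2, he3, he4] at hsplit2
        unfold N
        omega
      -- derive contradiction
      have hNd' : N S (-d) = 0 := by rw [N_neg]; exact hNd
      have k1 := hkey (-d)
      rw [hNd', if_pos (show -(-d) ∈ S by rw [neg_neg]; exact hdS)] at k1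
      have k2 := hkey (-d - d)
      have h2d : -(-d - d) ∉ S := by
        rw [show -(-d - d) = d + d by ring]
        intro hmem
        have : -d - d ∈ S := (hE d).mp hdS
        exact hsym _ hmem _ this (by ring)
      rw [if_neg h2d] at k2
      -- so N S (-d - d - d) = 1
      have hN3 : N S (-d - d - d) = 1 := by omega
      rcases eq_or_ne (-d - d - d) 0 with h3 | h3
      · rw [h3, N_zero, hScard] at hN3
        omega
      · exact (hquadN.mp hq) _ h3 hN3
    · exact hge
  · -- RHS → Quadrangular
    intro hall
    rw [hquadN]
    intro x hx
    have hxval : 1 ≤ x.val ∧ x.val ≤ n - 1 := by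
      constructor
      · exact Nat.one_le_iff_ne_zero.mpr (fun h => hx ((ZMod.val_eq_zero x).mp h))
      · have := x.val_lt
        omega
    have hxc : ((x.val : ℕ) : ZMod n) = x := (ZMod.natCast_val x).trans (ZMod.cast_id n x)
    rcases le_or_gt x.val ((n-1)/2) with hle | hgt
    · have := (hrhs x.val hxval.1 hle).mp (hall x.val hxval.1 hle)
      rw [hxc] at this
      omega
    · set m := n - x.val with hm
      have hm1 : 1 ≤ m := by omega
      have hm2 : m ≤ (n - 1) / 2 := by omega
      have hxm : x = -(m : ZMod n) := by
        have : ((m : ℕ) : ZMod n) = (n : ZMod n) - ((x.val : ℕ) : ZMod n) := by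
          rw [hm, Nat.cast_sub (by omega)]
        rw [this, hxc, ZMod.natCast_self]
        ring
      have := (hrhs m hm1 hm2).mp (hall m hm1 hm2)
      rw [hxm, N_neg]
      omega
end

section
/- Let l ≥ 3 and a₁,…,a_l be integers each at least 5. Let T₁,…,T_l be regular or near regular tournaments with |V(Tᵢ)| = aᵢ, and let T′ be a tournament on {1,…,l} with no transmitter and no receiver. The composition T obtained by replacing vertex i of T′ by Tᵢ (with all arcs from every vertex of Tᵢ to every vertex of Tⱼ when i → j in T′) is quadrangular. -/
open Finset

variable {V : Type} [Fintype V] [DecidableEq V]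

section Aux

variable {W : Type} [Fintype W] [DecidableEq W]

lemma aux_out_in_card (T : Tournament W) (u : W) :
    (outset T u).card + (inset T u).card = Fintype.card W - 1 := by
  have hdisj : Disjoint (outset T u) (inset T u) := by
    rw [Finset.disjoint_left]
    intro v hv hv'
    simp only [outset, inset, Finset.mem_filter, Finset.mem_univ, true_and] at hv hv'
    by_cases h : v = u
    · subst h; rw [T.irrefl] at hv; exact absurd hv (by simp)
    · have h2 := T.asymm u v (Ne.symm h)
      rw [hv', hv] at h2; simp at h2
  have hunion : outset T u ∪ inset T u = univ.erase u := by
    ext v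
    simp only [outset, inset, Finset.mem_union, Finset.mem_filter, Finset.mem_univ,
      true_and, Finset.mem_erase, and_true]
    constructor
    · rintro (h | h) rfl
      · rw [T.irrefl] at h; exact absurd h (by simp)
      · rw [T.irrefl] at h; exact absurd h (by simp)
    · intro hv
      have h2 := T.asymm u v (Ne.symm hv)
      cases hb : T.beats v u with
      | true => exact Or.inr rfl
      | false => left; rw [h2, hb]; rfl
  have hc := Finset.card_union_of_disjoint hdisj
  rw [hunion, Finset.card_erase_of_mem (Finset.mem_univ u), Finset.card_univ] at hc
  omega

lemma aux_sum_deg (T : Tournament W) :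
    2 * (∑ v, (outset T v).card) = Fintype.card W * (Fintype.card W - 1) := by
  have hio : ∑ v, (inset T v).card = ∑ v, (outset T v).card := by
    simp only [outset, inset, Finset.card_filter]
    exact Finset.sum_comm
  calc 2 * (∑ v, (outset T v).card)
      = ∑ v, (outset T v).card + ∑ v, (inset T v).card := by rw [hio]; ring
    _ = ∑ v, ((outset T v).card + (inset T v).card) := (Finset.sum_add_distrib).symm
    _ = ∑ _v : W, (Fintype.card W - 1) :=
        Finset.sum_congr rfl fun v _ => aux_out_in_card T v
    _ = Fintype.card W * (Fintype.card W - 1) := by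
        rw [Finset.sum_const, Finset.card_univ, smul_eq_mul]

lemma aux_mindeg (T : Tournament W) (h : NearRegular T) (h5 : 5 ≤ Fintype.card W)
    (y : W) : 2 ≤ (outset T y).card := by
  by_contra h2
  push_neg at h2
  have hy : (outset T y).card ≤ 1 := by omega
  have hsum := aux_sum_deg T
  have hsplit : ∑ v, (outset T v).card
      = (outset T y).card + ∑ v ∈ univ.erase y, (outset T v).card :=
    (Finset.add_sum_erase univ (fun v => (outset T v).card) (Finset.mem_univ y)).symm
  have hcard : (univ.erase y).card = Fintype.card W - 1 := by
    rw [Finset.card_erase_of_mem (Finset.mem_univ y), Finset.card_univ]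
  have hbound : ∑ v ∈ univ.erase y, (outset T v).card ≤ (Fintype.card W - 1) * 2 := by
    calc ∑ v ∈ univ.erase y, (outset T v).card
        ≤ ∑ _v ∈ univ.erase y, 2 :=
          Finset.sum_le_sum (fun v _ => by have := h v y; omega)
      _ = (Fintype.card W - 1) * 2 := by
          rw [Finset.sum_const, smul_eq_mul, hcard]
  have h4 : 4 ≤ Fintype.card W - 1 := by omega
  have hmul : Fintype.card W * 4 ≤ Fintype.card W * (Fintype.card W - 1) :=
    Nat.mul_le_mul_left _ h4
  omega

lemma aux_two {s : Finset W} (h : 2 ≤ s.card) : ∃ x ∈ s, ∃ y ∈ s, x ≠ y :=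
  Finset.one_lt_card.mp h

lemma aux_dual_nearreg (T : Tournament W) (h : NearRegular T) :
    NearRegular T.dual := by
  intro u v
  have hu := aux_out_in_card T u
  have hv := aux_out_in_card T v
  have hdu : outset T.dual u = inset T u := rfl
  have hdv : outset T.dual v = inset T v := rfl
  have := h v u
  rw [hdu, hdv]
  omega

end Aux

section Comp

variable {l : ℕ} {a : Fin l → ℕ}

lemma aux_pair (ha : ∀ i, 5 ≤ a i)
    (Ts : ∀ i : Fin l, Tournament (Fin (a i))) (hreg : ∀ i, NearRegular (Ts i))
    (T' : Tournament (Fin l))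
    (T : Tournament (Σ i : Fin l, Fin (a i)))
    (hin : ∀ (i : Fin l) (u v : Fin (a i)),
      T.beats ⟨i, u⟩ ⟨i, v⟩ = true ↔ (Ts i).beats u v = true)
    (hout : ∀ i j : Fin l, i ≠ j → ∀ (u : Fin (a i)) (v : Fin (a j)),
      T.beats ⟨i, u⟩ ⟨j, v⟩ = true ↔ T'.beats i j = true)
    (i j : Fin l) (hij : i ≠ j) (hb : T'.beats i j = true)
    (x : Fin (a i)) (y : Fin (a j)) :
    2 ≤ (outset T ⟨i, x⟩ ∩ outset T ⟨j, y⟩).card := by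
  have hcard : 5 ≤ Fintype.card (Fin (a j)) := by simp [ha j]
  have h2 := aux_mindeg (Ts j) (hreg j) hcard y
  obtain ⟨w1, hw1, w2, hw2, hne⟩ := aux_two h2
  simp only [outset, Finset.mem_filter, Finset.mem_univ, true_and] at hw1 hw2
  have m1 : (⟨j, w1⟩ : Σ k, Fin (a k)) ∈ outset T ⟨i, x⟩ ∩ outset T ⟨j, y⟩ := by
    simp only [Finset.mem_inter, outset, Finset.mem_filter, Finset.mem_univ, true_and]
    exact ⟨(hout i j hij x w1).mpr hb, (hin j y w1).mpr hw1⟩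
  have m2 : (⟨j, w2⟩ : Σ k, Fin (a k)) ∈ outset T ⟨i, x⟩ ∩ outset T ⟨j, y⟩ := by
    simp only [Finset.mem_inter, outset, Finset.mem_filter, Finset.mem_univ, true_and]
    exact ⟨(hout i j hij x w2).mpr hb, (hin j y w2).mpr hw2⟩
  have hne' : (⟨j, w1⟩ : Σ k, Fin (a k)) ≠ ⟨j, w2⟩ := by
    intro hcontra
    exact hne (eq_of_heq (Sigma.mk.inj_iff.mp hcontra).2)
  exact Finset.one_lt_card.mpr ⟨_, m1, _, m2, hne'⟩

lemma aux_outquad (ha : ∀ i, 5 ≤ a i)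
    (Ts : ∀ i : Fin l, Tournament (Fin (a i))) (hreg : ∀ i, NearRegular (Ts i))
    (T' : Tournament (Fin l))
    (hnorec : ¬ ∃ t : Fin l, ∀ v : Fin l, v ≠ t → T'.beats v t = true)
    (T : Tournament (Σ i : Fin l, Fin (a i)))
    (hin : ∀ (i : Fin l) (u v : Fin (a i)),
      T.beats ⟨i, u⟩ ⟨i, v⟩ = true ↔ (Ts i).beats u v = true)
    (hout : ∀ i j : Fin l, i ≠ j → ∀ (u : Fin (a i)) (v : Fin (a j)),
      T.beats ⟨i, u⟩ ⟨j, v⟩ = true ↔ T'.beats i j = true) :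
    OutQuadrangular T := by
  rintro ⟨i, x⟩ ⟨j, y⟩ huv
  suffices h : 2 ≤ (outset T ⟨i, x⟩ ∩ outset T ⟨j, y⟩).card by omega
  by_cases hij : i = j
  · subst hij
    push_neg at hnorec
    obtain ⟨k, hki, hk⟩ := hnorec i
    have hkfalse : T'.beats k i = false := by
      cases hkb : T'.beats k i with
      | true => exact absurd hkb hk
      | false => rfl
    have hik : T'.beats i k = true := by
      rw [T'.asymm i k (Ne.symm hki), hkfalse]; rfl
    have h5 : 5 ≤ a k := ha k
    have m1 : (⟨k, ⟨0, by omega⟩⟩ : Σ m, Fin (a m)) ∈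
        outset T ⟨i, x⟩ ∩ outset T ⟨i, y⟩ := by
      simp only [Finset.mem_inter, outset, Finset.mem_filter, Finset.mem_univ, true_and]
      exact ⟨(hout i k (Ne.symm hki) x _).mpr hik, (hout i k (Ne.symm hki) y _).mpr hik⟩
    have m2 : (⟨k, ⟨1, by omega⟩⟩ : Σ m, Fin (a m)) ∈
        outset T ⟨i, x⟩ ∩ outset T ⟨i, y⟩ := by
      simp only [Finset.mem_inter, outset, Finset.mem_filter, Finset.mem_univ, true_and]
      exact ⟨(hout i k (Ne.symm hki) x _).mpr hik, (hout i k (Ne.symm hki) y _).mpr hik⟩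
    have hne' : (⟨k, ⟨0, by omega⟩⟩ : Σ m, Fin (a m)) ≠ ⟨k, ⟨1, by omega⟩⟩ := by
      intro hcontra
      have := eq_of_heq (Sigma.mk.inj_iff.mp hcontra).2
      simp [Fin.ext_iff] at this
    exact Finset.one_lt_card.mpr ⟨_, m1, _, m2, hne'⟩
  · cases hb : T'.beats i j with
    | true => exact aux_pair ha Ts hreg T' T hin hout i j hij hb x y
    | false =>
      have hji : T'.beats j i = true := by
        rw [T'.asymm j i (Ne.symm hij), hb]; rfl
      rw [Finset.inter_comm]
      exact aux_pair ha Ts hreg T' T hin hout j i (Ne.symm hij) hji y x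

end Comp

theorem stmt_14 (l : ℕ) (hl : 3 ≤ l) (a : Fin l → ℕ) (ha : ∀ i, 5 ≤ a i)
    (Ts : ∀ i : Fin l, Tournament (Fin (a i))) (hreg : ∀ i, NearRegular (Ts i))
    (T' : Tournament (Fin l))
    (hnotrans : ¬ ∃ s : Fin l, ∀ v : Fin l, v ≠ s → T'.beats s v = true)
    (hnorec : ¬ ∃ t : Fin l, ∀ v : Fin l, v ≠ t → T'.beats v t = true)
    (T : Tournament (Σ i : Fin l, Fin (a i)))
    (hin : ∀ (i : Fin l) (u v : Fin (a i)),
      T.beats ⟨i, u⟩ ⟨i, v⟩ = true ↔ (Ts i).beats u v = true)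
    (hout : ∀ i j : Fin l, i ≠ j → ∀ (u : Fin (a i)) (v : Fin (a j)),
      T.beats ⟨i, u⟩ ⟨j, v⟩ = true ↔ T'.beats i j = true) :
    Quadrangular T := by
  constructor
  · exact aux_outquad ha Ts hreg T' hnorec T hin hout
  · have hdual : OutQuadrangular T.dual := by
      apply aux_outquad ha (fun i => (Ts i).dual)
        (fun i => aux_dual_nearreg _ (hreg i)) T'.dual
      · rintro ⟨t, ht⟩
        exact hnotrans ⟨t, fun v hv => ht v hv⟩
      · intro i u v
        exact hin i v u
      · intro i j hij u v
        exact hout j i (Ne.symm hij) v u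
    exact hdual
end

section
/- Almost all tournaments are quadrangular: the proportion of labeled tournaments on n vertices that are quadrangular tends to 1 as n → ∞. In particular, the probability that a uniformly random tournament on n vertices has two distinct vertices x,y with |O(x) ∩ O(y)| = 1 is at most n(n−1)(n−2)·3^(n−3)/2^(2n−3). -/
open Finset

variable {V : Type} [Fintype V] [DecidableEq V]

-- helpers
abbrev PIdx (n : ℕ) := {p : Fin n × Fin n // p.1 < p.2}

def toT (n : ℕ) (f : PIdx n → Bool) : Tournament (Fin n) where
  beats u v := if h : u < v then f ⟨(u,v), h⟩ else if h' : v < u then !f ⟨(v,u), h'⟩ else false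
  asymm u v huv := by
    rcases lt_trichotomy u v with h | h | h
    · simp [dif_pos h, dif_neg (lt_asymm h)]
    · exact absurd h huv
    · simp [dif_pos h, dif_neg (lt_asymm h)]
  irrefl v := by simp

lemma Tournament.ext' {W : Type} {T S : Tournament W} (h : T.beats = S.beats) : T = S := by
  cases T; cases S; simpa using h

def tEquiv (n : ℕ) : Tournament (Fin n) ≃ (PIdx n → Bool) where
  toFun T p := T.beats p.1.1 p.1.2
  invFun f := toT n f
  left_inv T := by
    apply Tournament.ext'
    funext u v
    show (if h : u < v then T.beats u v else if h' : v < u then !T.beats v u else false) = T.beats u v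
    rcases lt_trichotomy u v with h | h | h
    · rw [dif_pos h]
    · subst h; rw [dif_neg (lt_irrefl u), dif_neg (lt_irrefl u), T.irrefl]
    · rw [dif_neg (lt_asymm h), dif_pos h, ← T.asymm u v (ne_of_gt h)]
  right_inv f := by
    funext p
    obtain ⟨⟨a, b⟩, h⟩ := p
    simp [toT, dif_pos h]

def pairIdx {n : ℕ} (a b : Fin n) (h : a ≠ b) : PIdx n :=
  if hlt : a < b then ⟨(a, b), hlt⟩
  else ⟨(b, a), lt_of_le_of_ne (not_lt.mp hlt) h.symm⟩

lemma pairIdx_spec {n : ℕ} (a b : Fin n) (h : a ≠ b) :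
    (pairIdx a b h).1 = (a, b) ∨ (pairIdx a b h).1 = (b, a) := by
  unfold pairIdx; split_ifs <;> simp

lemma beats_toT {n : ℕ} (f : PIdx n → Bool) (a b : Fin n) (h : a ≠ b) :
    (toT n f).beats a b = (if a < b then f (pairIdx a b h) else !f (pairIdx a b h)) := by
  show (if hlt : a < b then f ⟨(a,b), hlt⟩ else if h' : b < a then !f ⟨(b,a), h'⟩ else false) = _
  by_cases hlt : a < b
  · rw [dif_pos hlt, if_pos hlt, pairIdx, dif_pos hlt]
  · have hba : b < a := lt_of_le_of_ne (not_lt.mp hlt) h.symm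
    rw [dif_neg hlt, dif_pos hba, if_neg hlt, pairIdx, dif_neg hlt]

/-- exactly-one-coordinate-matching count -/
lemma count_exactly_one {α W : Type} [Fintype α] [DecidableEq α] [Fintype W] [DecidableEq W]
    (b : α → W) :
    (univ.filter fun g : α → W => (univ.filter fun z => g z = b z).card = 1).card
      = Fintype.card α * (Fintype.card W - 1) ^ (Fintype.card α - 1) := by
  classical
  have key : (univ.filter fun g : α → W => (univ.filter fun z => g z = b z).card = 1)
      = univ.biUnion (fun z0 : α =>
          Fintype.piFinset (fun z => if z = z0 then {b z} else {b z}ᶜ)) := by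
    ext g
    simp only [mem_filter, mem_univ, true_and, mem_biUnion, Fintype.mem_piFinset,
      Finset.card_eq_one]
    constructor
    · rintro ⟨z0, hz0⟩
      refine ⟨z0, fun z => ?_⟩
      by_cases hz : z = z0
      · subst hz
        have : z ∈ univ.filter fun z => g z = b z := by rw [hz0]; exact mem_singleton_self z
        simp only [mem_filter] at this
        simp [this.2]
      · rw [if_neg hz]
        have : z ∉ univ.filter fun z => g z = b z := by
          rw [hz0]; simp [hz]
        simp only [mem_filter, mem_univ, true_and] at this
        simpa using this
    · rintro ⟨z0, hz0⟩
      refine ⟨z0, ?_⟩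
      ext z
      simp only [mem_filter, mem_univ, true_and, mem_singleton]
      constructor
      · intro hg
        by_contra hz
        have := hz0 z
        rw [if_neg hz] at this
        simp [hg] at this
      · intro hz
        subst hz
        have := hz0 z
        simpa using this
  rw [key, Finset.card_biUnion]
  · have : ∀ z0 : α, (Fintype.piFinset (fun z => if z = z0 then ({b z} : Finset W) else {b z}ᶜ)).card
        = (Fintype.card W - 1) ^ (Fintype.card α - 1) := by
      intro z0
      rw [Fintype.card_piFinset]
      rw [← Finset.mul_prod_erase univ _ (mem_univ z0)]
      rw [if_pos rfl, Finset.card_singleton, one_mul]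
      rw [Finset.prod_congr rfl (fun z hz => ?_), Finset.prod_const,
        Finset.card_erase_of_mem (mem_univ z0), Finset.card_univ]
      rw [if_neg (Finset.ne_of_mem_erase hz), Finset.card_compl, Finset.card_singleton]
    rw [Finset.sum_congr rfl (fun z0 _ => this z0), Finset.sum_const, Finset.card_univ, smul_eq_mul]
  · intro z0 _ z1 _ hne
    simp only [Finset.disjoint_left, Fintype.mem_piFinset]
    intro g h0 h1
    have a0 := h0 z1
    have a1 := h1 z1
    rw [if_neg (Ne.symm hne)] at a0
    rw [if_pos rfl] at a1
    simp only [mem_singleton] at a1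
    simp [a1] at a0

lemma pairIdx_inj {n : ℕ} {a b c d : Fin n} (h1 : a ≠ b) (h2 : c ≠ d)
    (h : pairIdx a b h1 = pairIdx c d h2) : (a = c ∧ b = d) ∨ (a = d ∧ b = c) := by
  have hv := congrArg Subtype.val h
  rcases pairIdx_spec a b h1 with e1 | e1 <;> rcases pairIdx_spec c d h2 with e2 | e2 <;>
      rw [e1, e2] at hv <;> simp only [Prod.ext_iff] at hv <;> tauto

section Pair

variable {n : ℕ} (x y : Fin n) (hxy : x ≠ y)

abbrev UU (n : ℕ) (x y : Fin n) := {z : Fin n // z ≠ x ∧ z ≠ y}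

def kap : UU n x y × Bool → PIdx n :=
  fun p => if p.2 then pairIdx x p.1.1 (Ne.symm p.1.2.1) else pairIdx y p.1.1 (Ne.symm p.1.2.2)

lemma kap_inj (hxy : x ≠ y) : Function.Injective (kap x y) := by
  rintro ⟨z, b⟩ ⟨w, c⟩ h
  unfold kap at h
  dsimp only at h
  cases b <;> cases c <;> simp only [if_true, if_false, Bool.false_eq_true, reduceIte] at h
  · rcases pairIdx_inj _ _ h with ⟨h1, h2⟩ | ⟨h1, h2⟩
    · simp only [Prod.mk.injEq]
      exact ⟨Subtype.ext h2, trivial⟩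
    · exact absurd h1.symm w.2.2
  · rcases pairIdx_inj _ _ h with ⟨h1, h2⟩ | ⟨h1, h2⟩
    · exact absurd h1 (Ne.symm hxy)
    · exact absurd h1.symm w.2.2
  · rcases pairIdx_inj _ _ h with ⟨h1, h2⟩ | ⟨h1, h2⟩
    · exact absurd h1 hxy
    · exact absurd h1.symm w.2.1
  · rcases pairIdx_inj _ _ h with ⟨h1, h2⟩ | ⟨h1, h2⟩
    · simp only [Prod.mk.injEq]
      exact ⟨Subtype.ext h2, trivial⟩
    · exact absurd h1.symm w.2.1

def bvec : UU n x y → Bool × Bool := fun z => (decide (y < z.1), decide (x < z.1))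

def hfun (f : PIdx n → Bool) : UU n x y → Bool × Bool :=
  fun z => (f (kap x y (z, false)), f (kap x y (z, true)))

lemma event_iff (f : PIdx n → Bool) (z : UU n x y) :
    ((toT n f).beats x z.1 = true ∧ (toT n f).beats y z.1 = true) ↔
      hfun x y f z = bvec x y z := by
  rw [beats_toT f x z.1 (Ne.symm z.2.1), beats_toT f y z.1 (Ne.symm z.2.2)]
  simp only [hfun, kap, bvec, if_true, if_false, Bool.false_eq_true, reduceIte, Prod.mk.injEq]
  by_cases hx : x < z.1 <;> by_cases hy : y < z.1 <;> simp [hx, hy, and_comm]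

lemma card_filter_subtype {α : Type} [Fintype α] [DecidableEq α] (P Q : α → Prop)
    [DecidablePred P] [DecidablePred Q] :
    (univ.filter fun a => P a ∧ Q a).card = (univ.filter (fun a : {v // P v} => Q a.1)).card := by
  refine (Finset.card_bij (fun (a : {v // P v}) _ => a.1) ?_ ?_ ?_).symm
  · intro a ha
    simp only [mem_filter, mem_univ, true_and] at ha ⊢
    exact ⟨a.2, ha⟩
  · intro a _ b _ h
    exact Subtype.ext h
  · intro a ha
    simp only [mem_filter, mem_univ, true_and] at ha
    exact ⟨⟨a, ha.1⟩, by simp [ha.2], rfl⟩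

lemma cond_iff (f : PIdx n → Bool) :
    (outset (toT n f) x ∩ outset (toT n f) y).card = 1 ↔
      (univ.filter fun z : UU n x y => hfun x y f z = bvec x y z).card = 1 := by
  set T := toT n f with hT
  have h1 : outset T x ∩ outset T y =
      univ.filter (fun z => (z ≠ x ∧ z ≠ y) ∧ (T.beats x z = true ∧ T.beats y z = true)) := by
    ext z
    simp only [outset, mem_inter, mem_filter, mem_univ, true_and]
    constructor
    · rintro ⟨hb1, hb2⟩
      refine ⟨⟨?_, ?_⟩, hb1, hb2⟩
      · rintro rfl; rw [T.irrefl] at hb1; exact Bool.false_ne_true hb1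
      · rintro rfl; rw [T.irrefl] at hb2; exact Bool.false_ne_true hb2
    · rintro ⟨_, hb1, hb2⟩; exact ⟨hb1, hb2⟩
  rw [h1, card_filter_subtype]
  have h2 : (univ.filter (fun z : UU n x y => T.beats x z.1 = true ∧ T.beats y z.1 = true))
      = (univ.filter fun z : UU n x y => hfun x y f z = bvec x y z) := by
    apply Finset.filter_congr
    intro z _
    rw [hT]
    exact ⟨fun h => (event_iff x y f z).mp h, fun h => (event_iff x y f z).mpr h⟩
  rw [h2]

def subProd {A B : Type} (D : A → Prop) : {q : A × B // D q.1} ≃ {a // D a} × B where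
  toFun q := (⟨q.1.1, q.2⟩, q.1.2)
  invFun p := ⟨(p.1.1, p.2), p.1.2⟩
  left_inv q := rfl
  right_inv p := rfl

noncomputable def bigE (hxy : x ≠ y) : (PIdx n → Bool) ≃
    ((UU n x y → Bool × Bool) × ({i : PIdx n // ¬ i ∈ Set.range (kap x y)} → Bool)) :=
  letI : DecidablePred (· ∈ Set.range (kap x y)) := Classical.decPred _
  (Equiv.piEquivPiSubtypeProd (fun i => i ∈ Set.range (kap x y)) (fun _ => Bool)).trans
    (Equiv.prodCongr
      ((Equiv.arrowCongr (Equiv.ofInjective _ (kap_inj x y hxy)).symm (Equiv.refl Bool)).trans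
        ((Equiv.curry _ _ _).trans
          (Equiv.arrowCongr (Equiv.refl _) (Equiv.boolArrowEquivProd Bool))))
      (Equiv.refl _))

lemma bigE_fst (hxy : x ≠ y) (f : PIdx n → Bool) :
    ((bigE x y hxy) f).1 = hfun x y f := by
  funext z
  rfl

lemma card_UU (hxy : x ≠ y) : Fintype.card (UU n x y) = n - 2 := by
  classical
  rw [Fintype.card_subtype]
  have : (univ.filter fun z : Fin n => z ≠ x ∧ z ≠ y) = univ \ {x, y} := by
    ext z; simp [and_comm]
  rw [this, Finset.card_sdiff_of_subset (by simp)]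
  rw [Finset.card_univ, Fintype.card_fin, Finset.card_insert_of_notMem (by simpa using hxy),
    Finset.card_singleton]

lemma pair_count_s16 (hxy : x ≠ y) :
    Nat.card {f : PIdx n → Bool //
        (outset (toT n f) x ∩ outset (toT n f) y).card = 1} * 4 ^ (n - 2)
      = (n - 2) * 3 ^ (n - 3) * Nat.card (PIdx n → Bool) := by
  classical
  set R := Nat.card ({i : PIdx n // ¬ i ∈ Set.range (kap x y)} → Bool) with hR
  have htot : Nat.card (PIdx n → Bool) = 4 ^ (n - 2) * R := by
    rw [Nat.card_congr (bigE x y hxy), Nat.card_prod]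
    congr 1
    rw [Nat.card_fun, Nat.card_eq_fintype_card, Nat.card_eq_fintype_card, card_UU x y hxy]
    simp
  have hnum : Nat.card {f : PIdx n → Bool //
      (outset (toT n f) x ∩ outset (toT n f) y).card = 1}
      = (n - 2) * 3 ^ (n - 3) * R := by
    have e1 : {f : PIdx n → Bool // (outset (toT n f) x ∩ outset (toT n f) y).card = 1} ≃
        {q : (UU n x y → Bool × Bool) × ({i : PIdx n // ¬ i ∈ Set.range (kap x y)} → Bool) //
          (univ.filter fun z : UU n x y => q.1 z = bvec x y z).card = 1} := by
      refine Equiv.subtypeEquiv (bigE x y hxy) (fun f => ?_)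
      rw [bigE_fst x y hxy f]
      exact cond_iff x y f
    rw [Nat.card_congr e1, Nat.card_congr (subProd (fun g : UU n x y → Bool × Bool => (univ.filter fun z => g z = bvec x y z).card = 1)), Nat.card_prod]
    congr 1
    rw [Nat.card_eq_fintype_card, Fintype.card_subtype, count_exactly_one (bvec x y),
      card_UU x y hxy]
    have h4 : Fintype.card (Bool × Bool) = 4 := by simp
    have hm : n - 2 - 1 = n - 3 := by omega
    rw [h4, hm]
  rw [hnum, htot]
  ring

end Pair

lemma natCard_subtype_tournament (n : ℕ) (P : Tournament (Fin n) → Prop) :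
    Nat.card {T : Tournament (Fin n) // P T} = Nat.card {f : PIdx n → Bool // P (toT n f)} :=
  Nat.card_congr (Equiv.subtypeEquiv (tEquiv n) (fun T =>
    iff_of_eq (congrArg P ((tEquiv n).symm_apply_apply T)).symm))

lemma card_S_le (n : ℕ) :
    2 * ((univ : Finset (Fin n × Fin n)).filter (fun p => p.1 < p.2)).card ≤ n * (n - 1) := by
  classical
  set S := (univ : Finset (Fin n × Fin n)).filter (fun p => p.1 < p.2) with hS
  set S' := S.image Prod.swap with hS'
  have hcard : S'.card = S.card := Finset.card_image_of_injective _ Prod.swap_injective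
  have hdisj : Disjoint S S' := by
    rw [Finset.disjoint_left]
    intro p hp hp'
    simp only [hS, hS', Finset.mem_image, mem_filter, mem_univ, true_and] at hp hp'
    obtain ⟨q, hq, hqp⟩ := hp'
    subst hqp
    exact absurd hq (not_lt_of_gt hp)
  have hsub : S ∪ S' ⊆ (univ : Finset (Fin n)).offDiag := by
    intro p hp
    rcases Finset.mem_union.mp hp with h | h
    · simp only [hS, mem_filter, mem_univ, true_and] at h
      simp [Finset.mem_offDiag, ne_of_lt h]
    · simp only [hS', hS, Finset.mem_image, mem_filter, mem_univ, true_and] at h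
      obtain ⟨q, hq, hqp⟩ := h
      subst hqp
      simp [Finset.mem_offDiag]
      exact (ne_of_lt hq).symm
  have h1 : 2 * S.card = (S ∪ S').card := by
    rw [Finset.card_union_of_disjoint hdisj, hcard]; ring
  have h2 : (S ∪ S').card ≤ n * n - n := by
    calc (S ∪ S').card ≤ (univ : Finset (Fin n)).offDiag.card := Finset.card_le_card hsub
    _ = n * n - n := by rw [Finset.offDiag_card, Finset.card_univ, Fintype.card_fin]
  have h3 : n * n - n = n * (n - 1) := by
    cases n with
    | zero => rfl
    | succ k => rw [Nat.succ_sub_one, Nat.mul_succ, Nat.add_sub_cancel]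
  omega

lemma union_bound (n : ℕ) :
    Nat.card {f : PIdx n → Bool // ∃ x y : Fin n, x ≠ y ∧
        (outset (toT n f) x ∩ outset (toT n f) y).card = 1} * (2 * 4 ^ (n - 2))
      ≤ n * (n - 1) * ((n - 2) * 3 ^ (n - 3) * Nat.card (PIdx n → Bool)) := by
  classical
  set S := (univ : Finset (Fin n × Fin n)).filter (fun p => p.1 < p.2) with hS
  set K := (n - 2) * 3 ^ (n - 3) * Nat.card (PIdx n → Bool) with hK
  have hsub : (univ.filter (fun f : PIdx n → Bool => ∃ x y : Fin n, x ≠ y ∧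
      (outset (toT n f) x ∩ outset (toT n f) y).card = 1))
      ⊆ S.biUnion (fun p => univ.filter (fun f : PIdx n → Bool =>
          (outset (toT n f) p.1 ∩ outset (toT n f) p.2).card = 1)) := by
    intro f hf
    simp only [mem_filter, mem_univ, true_and] at hf
    obtain ⟨x, y, hxy, hc⟩ := hf
    rcases lt_or_gt_of_ne hxy with h | h
    · exact mem_biUnion.mpr ⟨(x, y), by simp [hS, h], by simp [hc]⟩
    · refine mem_biUnion.mpr ⟨(y, x), by simp [hS, h], ?_⟩
      simp only [mem_filter, mem_univ, true_and]
      rwa [Finset.inter_comm]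
  have hA : Nat.card {f : PIdx n → Bool // ∃ x y : Fin n, x ≠ y ∧
      (outset (toT n f) x ∩ outset (toT n f) y).card = 1}
      = (univ.filter (fun f : PIdx n → Bool => ∃ x y : Fin n, x ≠ y ∧
        (outset (toT n f) x ∩ outset (toT n f) y).card = 1)).card := by
    rw [Nat.card_eq_fintype_card, Fintype.card_subtype]
  have hstep : ∀ p ∈ S, (univ.filter (fun f : PIdx n → Bool =>
      (outset (toT n f) p.1 ∩ outset (toT n f) p.2).card = 1)).card * 4 ^ (n - 2) = K := by
    intro p hp
    simp only [hS, mem_filter, mem_univ, true_and] at hp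
    rw [← Fintype.card_subtype, ← Nat.card_eq_fintype_card]
    exact pair_count_s16 p.1 p.2 (ne_of_lt hp)
  have hle : (univ.filter (fun f : PIdx n → Bool => ∃ x y : Fin n, x ≠ y ∧
      (outset (toT n f) x ∩ outset (toT n f) y).card = 1)).card
      ≤ ∑ p ∈ S, (univ.filter (fun f : PIdx n → Bool =>
        (outset (toT n f) p.1 ∩ outset (toT n f) p.2).card = 1)).card :=
    le_trans (Finset.card_le_card hsub) (Finset.card_biUnion_le)
  have hsum : (∑ p ∈ S, (univ.filter (fun f : PIdx n → Bool =>
      (outset (toT n f) p.1 ∩ outset (toT n f) p.2).card = 1)).card) * 4 ^ (n - 2)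
      = S.card * K := by
    rw [Finset.sum_mul]
    rw [Finset.sum_congr rfl hstep, Finset.sum_const, smul_eq_mul]
  calc Nat.card {f : PIdx n → Bool // ∃ x y : Fin n, x ≠ y ∧
      (outset (toT n f) x ∩ outset (toT n f) y).card = 1} * (2 * 4 ^ (n - 2))
      = 2 * (Nat.card {f : PIdx n → Bool // ∃ x y : Fin n, x ≠ y ∧
        (outset (toT n f) x ∩ outset (toT n f) y).card = 1} * 4 ^ (n - 2)) := by ring
    _ ≤ 2 * (S.card * K) := by
        rw [hA]
        exact Nat.mul_le_mul_left 2 (by rw [← hsum]; exact Nat.mul_le_mul_right _ hle)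
    _ = (2 * S.card) * K := by ring
    _ ≤ n * (n - 1) * K := Nat.mul_le_mul_right K (card_S_le n)

lemma tot_eq (n : ℕ) : Nat.card (Tournament (Fin n)) = Nat.card (PIdx n → Bool) :=
  Nat.card_congr (tEquiv n)

lemma tot_pos (n : ℕ) : 0 < Nat.card (PIdx n → Bool) := Nat.card_pos

lemma outbad_le (n : ℕ) :
    (Nat.card {T : Tournament (Fin n) //
        ∃ x y : Fin n, x ≠ y ∧ (outset T x ∩ outset T y).card = 1} : ℝ) /
      (Nat.card (Tournament (Fin n)) : ℝ) ≤
    ((n : ℝ) * ((n : ℝ) - 1) * ((n : ℝ) - 2) * 3 ^ (n - 3)) / 2 ^ (2 * n - 3) := by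
  rw [natCard_subtype_tournament n
    (fun T => ∃ x y : Fin n, x ≠ y ∧ (outset T x ∩ outset T y).card = 1), tot_eq]
  rcases Nat.lt_or_ge n 2 with hn | hn
  · have hempty : Nat.card {f : PIdx n → Bool // ∃ x y : Fin n, x ≠ y ∧
        (outset (toT n f) x ∩ outset (toT n f) y).card = 1} = 0 := by
      rw [Nat.card_eq_zero]
      left
      rw [isEmpty_subtype]
      rintro f ⟨x, y, hxy, -⟩
      interval_cases n
      · exact Fin.elim0 x
      · exact hxy (Subsingleton.elim x y)
    rw [hempty]
    have hrhs : (0 : ℝ) ≤ ((n : ℝ) * ((n : ℝ) - 1) * ((n : ℝ) - 2) * 3 ^ (n - 3)) / 2 ^ (2 * n - 3) := by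
      interval_cases n <;> norm_num
    simpa using hrhs
  · have hub := union_bound n
    have h2pow : (2 : ℝ) ^ (2 * n - 3) = 2 * 4 ^ (n - 2) := by
      have he : 2 * n - 3 = 2 * (n - 2) + 1 := by omega
      rw [he, pow_succ, pow_mul]
      norm_num
      ring
    have hTpos : (0 : ℝ) < (Nat.card (PIdx n → Bool) : ℝ) := by
      exact_mod_cast tot_pos n
    rw [div_le_div_iff₀ hTpos (by positivity)]
    rw [h2pow]
    have hcast : (Nat.card {f : PIdx n → Bool // ∃ x y : Fin n, x ≠ y ∧
        (outset (toT n f) x ∩ outset (toT n f) y).card = 1} : ℝ) * (2 * 4 ^ (n - 2))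
        ≤ ((n : ℝ) * ((n : ℝ) - 1) * (((n : ℝ) - 2) * 3 ^ (n - 3) *
            (Nat.card (PIdx n → Bool) : ℝ))) := by
      have hc : ((Nat.card {f : PIdx n → Bool // ∃ x y : Fin n, x ≠ y ∧
          (outset (toT n f) x ∩ outset (toT n f) y).card = 1} * (2 * 4 ^ (n - 2)) : ℕ) : ℝ)
          ≤ ((n * (n - 1) * ((n - 2) * 3 ^ (n - 3) * Nat.card (PIdx n → Bool)) : ℕ) : ℝ) :=
        Nat.cast_le.mpr hub
      push_cast [Nat.cast_sub (by omega : 1 ≤ n), Nat.cast_sub (by omega : 2 ≤ n)] at hc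
      convert hc using 2 <;> push_cast <;> ring
    calc (Nat.card {f : PIdx n → Bool // ∃ x y : Fin n, x ≠ y ∧
        (outset (toT n f) x ∩ outset (toT n f) y).card = 1} : ℝ) * (2 * 4 ^ (n - 2))
        ≤ ((n : ℝ) * ((n : ℝ) - 1) * (((n : ℝ) - 2) * 3 ^ (n - 3) *
            (Nat.card (PIdx n → Bool) : ℝ))) := hcast
      _ = (n : ℝ) * ((n : ℝ) - 1) * ((n : ℝ) - 2) * 3 ^ (n - 3) *
            (Nat.card (PIdx n → Bool) : ℝ) := by ring

instance finTour (n : ℕ) : Finite (Tournament (Fin n)) := Finite.of_equiv _ (tEquiv n).symm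

lemma natCard_or_le {α : Type} [Finite α] (p q : α → Prop) :
    Nat.card {x // p x ∨ q x} ≤ Nat.card {x // p x} + Nat.card {x // q x} := by
  classical
  rw [← Nat.card_sum]
  apply Nat.card_le_card_of_injective
    (fun x => if h : p x.1 then Sum.inl ⟨x.1, h⟩ else Sum.inr ⟨x.1, x.2.resolve_left h⟩)
  intro a b hab
  by_cases ha : p a.1 <;> by_cases hb : p b.1 <;>
    simp only [ha, hb, dif_pos, dif_neg, not_false_iff, Sum.inl.injEq, Sum.inr.injEq,
      Subtype.mk.injEq, reduceCtorEq] at hab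
  · exact Subtype.ext hab
  · exact Subtype.ext hab

lemma natCard_add_compl {α : Type} [Finite α] (p : α → Prop) :
    Nat.card {x // p x} + Nat.card {x // ¬ p x} = Nat.card α := by
  classical
  rw [← Nat.card_sum]
  exact Nat.card_congr (Equiv.sumCompl p)

def dualEquiv (V : Type) : Tournament V ≃ Tournament V where
  toFun := Tournament.dual
  invFun := Tournament.dual
  left_inv T := rfl
  right_inv T := rfl

lemma inQuad_dual {n : ℕ} (T : Tournament (Fin n)) :
    InQuadrangular T ↔ OutQuadrangular T.dual := Iff.rfl

lemma notOut_iff {n : ℕ} (T : Tournament (Fin n)) :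
    ¬ OutQuadrangular T ↔ ∃ x y : Fin n, x ≠ y ∧ (outset T x ∩ outset T y).card = 1 := by
  unfold OutQuadrangular
  push_neg
  simp [not_not]

lemma bad_le (n : ℕ) :
    Nat.card {T : Tournament (Fin n) // ¬ Quadrangular T} ≤
      2 * Nat.card {T : Tournament (Fin n) //
        ∃ x y : Fin n, x ≠ y ∧ (outset T x ∩ outset T y).card = 1} := by
  have h1 : Nat.card {T : Tournament (Fin n) // ¬ Quadrangular T}
      = Nat.card {T : Tournament (Fin n) // ¬ OutQuadrangular T ∨ ¬ InQuadrangular T} :=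
    Nat.card_congr (Equiv.subtypeEquivRight (fun T => by unfold Quadrangular; tauto))
  have h2 : Nat.card {T : Tournament (Fin n) // ¬ InQuadrangular T}
      = Nat.card {T : Tournament (Fin n) // ¬ OutQuadrangular T} :=
    Nat.card_congr (Equiv.subtypeEquiv (dualEquiv (Fin n)) (fun T =>
      not_congr (inQuad_dual T)))
  have h3 : Nat.card {T : Tournament (Fin n) // ¬ OutQuadrangular T}
      = Nat.card {T : Tournament (Fin n) //
        ∃ x y : Fin n, x ≠ y ∧ (outset T x ∩ outset T y).card = 1} :=
    Nat.card_congr (Equiv.subtypeEquivRight (fun T => notOut_iff T))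
  calc Nat.card {T : Tournament (Fin n) // ¬ Quadrangular T}
      = Nat.card {T : Tournament (Fin n) // ¬ OutQuadrangular T ∨ ¬ InQuadrangular T} := h1
    _ ≤ Nat.card {T : Tournament (Fin n) // ¬ OutQuadrangular T}
        + Nat.card {T : Tournament (Fin n) // ¬ InQuadrangular T} := natCard_or_le _ _
    _ = 2 * Nat.card {T : Tournament (Fin n) //
        ∃ x y : Fin n, x ≠ y ∧ (outset T x ∩ outset T y).card = 1} := by
        rw [h2, h3]; ring

lemma Bq_tendsto :
    Filter.Tendsto (fun n : ℕ =>
      ((n : ℝ) * ((n : ℝ) - 1) * ((n : ℝ) - 2) * 3 ^ (n - 3)) / 2 ^ (2 * n - 3))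
      Filter.atTop (nhds 0) := by
  have hg : Filter.Tendsto (fun n : ℕ => (n : ℝ) ^ 3 * (3 / 4 : ℝ) ^ n)
      Filter.atTop (nhds 0) := by
    have hsum : Summable (fun n : ℕ => (n : ℝ) ^ 3 * (3 / 4 : ℝ) ^ n) :=
      summable_pow_mul_geometric_of_norm_lt_one 3 (by rw [Real.norm_eq_abs, abs_of_pos (by norm_num : (0:ℝ) < 3/4)]; norm_num)
    exact hsum.tendsto_atTop_zero
  apply squeeze_zero' ?_ ?_ hg
  · filter_upwards [Filter.eventually_ge_atTop 2] with n hn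
    have h1 : (1 : ℝ) ≤ (n : ℝ) := by exact_mod_cast Nat.one_le_of_lt hn
    have h2 : (2 : ℝ) ≤ (n : ℝ) := by exact_mod_cast hn
    have : (0 : ℝ) ≤ (n : ℝ) * ((n : ℝ) - 1) * ((n : ℝ) - 2) * 3 ^ (n - 3) := by
      apply mul_nonneg
      apply mul_nonneg
      apply mul_nonneg <;> linarith
      · linarith
      · positivity
    positivity
  · filter_upwards [Filter.eventually_ge_atTop 3] with n hn
    have h3 : (3 : ℝ) ^ (n - 3) * 27 = 3 ^ n := by
      rw [show (27 : ℝ) = 3 ^ 3 by norm_num, ← pow_add]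
      congr 1
      omega
    have h4 : (2 : ℝ) ^ (2 * n - 3) * 8 = 4 ^ n := by
      rw [show (8 : ℝ) = 2 ^ 3 by norm_num, ← pow_add, show 2 * n - 3 + 3 = 2 * n by omega,
        show (4 : ℝ) = 2 ^ 2 by norm_num, ← pow_mul]
    have hn3 : (3 : ℝ) ≤ (n : ℝ) := by exact_mod_cast hn
    have key : 8 * ((n : ℝ) * ((n : ℝ) - 1) * ((n : ℝ) - 2)) ≤ 27 * (n : ℝ) ^ 3 := by
      nlinarith [sq_nonneg ((n : ℝ)), sq_nonneg ((n : ℝ) - 1), mul_nonneg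
        (mul_nonneg (by linarith : (0:ℝ) ≤ (n:ℝ)) (by linarith : (0:ℝ) ≤ (n:ℝ) - 1))
        (by linarith : (0:ℝ) ≤ (n:ℝ) - 2)]
    rw [div_le_iff₀ (by positivity)]
    have h4n : (4 : ℝ) ^ n > 0 := by positivity
    -- cross-multiplied approach instead
    have goal2 : ((n : ℝ) * ((n : ℝ) - 1) * ((n : ℝ) - 2) * 3 ^ (n - 3)) * 4 ^ n
        ≤ ((n : ℝ) ^ 3 * (3 / 4 : ℝ) ^ n * 2 ^ (2 * n - 3)) * 4 ^ n := by
      have lhs_eq : ((n : ℝ) * ((n : ℝ) - 1) * ((n : ℝ) - 2) * 3 ^ (n - 3)) * 4 ^ n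
          = (8 * ((n : ℝ) * ((n : ℝ) - 1) * ((n : ℝ) - 2))) * (3 ^ (n - 3) * 2 ^ (2 * n - 3)) := by
        rw [← h4]; ring
      have hc : (3 / 4 : ℝ) ^ n * 4 ^ n = 3 ^ n := by
        rw [div_pow]
        exact div_mul_cancel₀ _ (by positivity)
      have rhs_eq : ((n : ℝ) ^ 3 * (3 / 4 : ℝ) ^ n * 2 ^ (2 * n - 3)) * 4 ^ n
          = (27 * (n : ℝ) ^ 3) * (3 ^ (n - 3) * 2 ^ (2 * n - 3)) := by
        calc ((n : ℝ) ^ 3 * (3 / 4 : ℝ) ^ n * 2 ^ (2 * n - 3)) * 4 ^ n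
            = (n : ℝ) ^ 3 * ((3 / 4 : ℝ) ^ n * 4 ^ n) * 2 ^ (2 * n - 3) := by ring
          _ = (n : ℝ) ^ 3 * (3 : ℝ) ^ n * 2 ^ (2 * n - 3) := by rw [hc]
          _ = (27 * (n : ℝ) ^ 3) * (3 ^ (n - 3) * 2 ^ (2 * n - 3)) := by rw [← h3]; ring
      rw [lhs_eq, rhs_eq]
      exact mul_le_mul_of_nonneg_right key (by positivity)
    have := (mul_le_mul_iff_of_pos_right h4n).mp goal2
    linarith

lemma good_ratio_bounds (n : ℕ) :
    1 - 2 * (((n : ℝ) * ((n : ℝ) - 1) * ((n : ℝ) - 2) * 3 ^ (n - 3)) / 2 ^ (2 * n - 3))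
      ≤ (Nat.card {T : Tournament (Fin n) // Quadrangular T} : ℝ) /
        (Nat.card (Tournament (Fin n)) : ℝ) ∧
    (Nat.card {T : Tournament (Fin n) // Quadrangular T} : ℝ) /
        (Nat.card (Tournament (Fin n)) : ℝ) ≤ 1 := by
  have hTpos : (0 : ℝ) < (Nat.card (Tournament (Fin n)) : ℝ) := by
    have := tot_pos n
    rw [← tot_eq n] at this
    exact_mod_cast this
  have hsplit := natCard_add_compl (α := Tournament (Fin n)) Quadrangular
  have hbad2 := bad_le n
  have hA := outbad_le n
  set Bq := ((n : ℝ) * ((n : ℝ) - 1) * ((n : ℝ) - 2) * 3 ^ (n - 3)) / 2 ^ (2 * n - 3) with hBq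
  set g := Nat.card {T : Tournament (Fin n) // Quadrangular T} with hg
  set b := Nat.card {T : Tournament (Fin n) // ¬ Quadrangular T} with hb
  set A := Nat.card {T : Tournament (Fin n) //
      ∃ x y : Fin n, x ≠ y ∧ (outset T x ∩ outset T y).card = 1} with hA2
  have hcast : (g : ℝ) + (b : ℝ) = (Nat.card (Tournament (Fin n)) : ℝ) := by
    exact_mod_cast congrArg (Nat.cast : ℕ → ℝ) hsplit
  have hble : (b : ℝ) ≤ 2 * (A : ℝ) := by exact_mod_cast hbad2
  constructor
  · have hbT : (b : ℝ) / (Nat.card (Tournament (Fin n)) : ℝ) ≤ 2 * Bq := by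
      calc (b : ℝ) / (Nat.card (Tournament (Fin n)) : ℝ)
          ≤ 2 * (A : ℝ) / (Nat.card (Tournament (Fin n)) : ℝ) :=
            by gcongr
        _ = 2 * ((A : ℝ) / (Nat.card (Tournament (Fin n)) : ℝ)) := by ring
        _ ≤ 2 * Bq := by linarith [hA]
    have hgT : (g : ℝ) / (Nat.card (Tournament (Fin n)) : ℝ)
        = 1 - (b : ℝ) / (Nat.card (Tournament (Fin n)) : ℝ) := by
      field_simp
      linarith [hcast]
    rw [hgT]
    linarith
  · rw [div_le_one hTpos]
    linarith [Nat.cast_nonneg (α := ℝ) b, hcast]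

theorem stmt_16 :
    Filter.Tendsto
      (fun n : ℕ =>
        (Nat.card {T : Tournament (Fin n) // Quadrangular T} : ℝ) /
          (Nat.card (Tournament (Fin n)) : ℝ))
      Filter.atTop (nhds 1) ∧
    ∀ n : ℕ,
      (Nat.card {T : Tournament (Fin n) //
          ∃ x y : Fin n, x ≠ y ∧ (outset T x ∩ outset T y).card = 1} : ℝ) /
        (Nat.card (Tournament (Fin n)) : ℝ) ≤
      ((n : ℝ) * ((n : ℝ) - 1) * ((n : ℝ) - 2) * 3 ^ (n - 3)) / 2 ^ (2 * n - 3) := by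
  constructor
  · have hlow : Filter.Tendsto (fun n : ℕ => 1 - 2 *
        (((n : ℝ) * ((n : ℝ) - 1) * ((n : ℝ) - 2) * 3 ^ (n - 3)) / 2 ^ (2 * n - 3)))
        Filter.atTop (nhds 1) := by
      have := tendsto_const_nhds (x := (1:ℝ)) (f := Filter.atTop (α := ℕ)) |>.sub
        (Bq_tendsto.const_mul 2)
      simpa using this
    apply tendsto_of_tendsto_of_tendsto_of_le_of_le' hlow tendsto_const_nhds
    · exact Filter.Eventually.of_forall (fun n => (good_ratio_bounds n).1)
    · exact Filter.Eventually.of_forall (fun n => (good_ratio_bounds n).2)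
  · exact outbad_le
end

section
/- The 9-vertex tournament T consisting of QR₇ together with two vertices x, y where x → y, y dominates all vertices of QR₇, and all vertices of QR₇ dominate x, is quadrangular but not strongly quadrangular (witnessed by the set S = {0,1,5} of vertices of QR₇, for which the union of pairwise common out-sets has size 2 < 3 = |S|). -/
open Finset

variable {V : Type} [Fintype V] [DecidableEq V]

def fT : (ZMod 7 ⊕ Fin 2) → (ZMod 7 ⊕ Fin 2) → Bool
  | .inl i, .inl j => decide (j - i ∈ ({1, 2, 4} : Finset (ZMod 7)))
  | .inl _, .inr k => decide (k = 0)
  | .inr k, .inl _ => decide (k = 1)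
  | .inr a, .inr b => decide (a = 0 ∧ b = 1)

def fTour : Tournament (ZMod 7 ⊕ Fin 2) := ⟨fT, by decide, by decide⟩

lemma lquad : Quadrangular fTour := by
  unfold Quadrangular OutQuadrangular InQuadrangular
  decide

lemma lcard : (pairOutUnion fTour {Sum.inl 0, Sum.inl 1, Sum.inl 5}).card = 2 := by decide

lemma lne : ∀ u ∈ ({Sum.inl 0, Sum.inl 1, Sum.inl 5} : Finset (ZMod 7 ⊕ Fin 2)),
    ∃ v ∈ ({Sum.inl 0, Sum.inl 1, Sum.inl 5} : Finset (ZMod 7 ⊕ Fin 2)),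
      u ≠ v ∧ (outset fTour u ∩ outset fTour v).Nonempty := by decide

theorem stmt_18 (T : Tournament (ZMod 7 ⊕ Fin 2))
    (h1 : ∀ i j : ZMod 7, T.beats (Sum.inl i) (Sum.inl j) = true ↔
      j - i ∈ ({1, 2, 4} : Finset (ZMod 7)))
    (h2 : T.beats (Sum.inr 0) (Sum.inr 1) = true)
    (h3 : ∀ i : ZMod 7, T.beats (Sum.inr 1) (Sum.inl i) = true)
    (h4 : ∀ i : ZMod 7, T.beats (Sum.inl i) (Sum.inr 0) = true) :
    Quadrangular T ∧ ¬ StronglyQuadrangular T ∧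
      (∀ u ∈ ({Sum.inl 0, Sum.inl 1, Sum.inl 5} : Finset (ZMod 7 ⊕ Fin 2)),
        ∃ v ∈ ({Sum.inl 0, Sum.inl 1, Sum.inl 5} : Finset (ZMod 7 ⊕ Fin 2)),
          u ≠ v ∧ (outset T u ∩ outset T v).Nonempty) ∧
      (pairOutUnion T {Sum.inl 0, Sum.inl 1, Sum.inl 5}).card = 2 := by
  obtain ⟨b, hasym, hirr⟩ := T
  simp only [Tournament.beats] at h1 h2 h3 h4
  have hb : b = fT := by
    funext u v
    match u, v with
    | .inl i, .inl j =>
      by_cases hp : j - i ∈ ({1, 2, 4} : Finset (ZMod 7))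
      · rw [(h1 i j).mpr hp]; simp [fT, hp]
      · have hx : b (Sum.inl i) (Sum.inl j) ≠ true := fun h => hp ((h1 i j).mp h)
        simp only [Bool.not_eq_true] at hx
        rw [hx]; simp [fT, hp]
    | .inl i, .inr k =>
      fin_cases k
      · simpa [fT] using h4 i
      · have h := hasym (Sum.inl i) (Sum.inr 1) (by simp)
        rw [h3 i] at h
        simpa [fT] using h
    | .inr k, .inl i =>
      fin_cases k
      · have h := hasym (Sum.inr 0) (Sum.inl i) (by simp)
        rw [h4 i] at h
        simpa [fT] using h
      · simpa [fT] using h3 i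
    | .inr a, .inr c =>
      fin_cases a <;> fin_cases c
      · simpa [fT] using hirr (Sum.inr 0)
      · simpa [fT] using h2
      · have h := hasym (Sum.inr 1) (Sum.inr 0) (by simp)
        rw [h2] at h
        simpa [fT] using h
      · simpa [fT] using hirr (Sum.inr 1)
  subst hb
  have heq : (⟨fT, hasym, hirr⟩ : Tournament (ZMod 7 ⊕ Fin 2)) = fTour := rfl
  rw [heq]
  refine ⟨lquad, ?_, lne, lcard⟩
  rintro ⟨hA, -⟩
  have h5 := hA {Sum.inl 0, Sum.inl 1, Sum.inl 5} lne
  rw [lcard] at h5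
  have h6 : ({Sum.inl 0, Sum.inl 1, Sum.inl 5} : Finset (ZMod 7 ⊕ Fin 2)).card = 3 := by decide
  omega
end
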